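/- arXiv:1404.1036 — 6 statements merged into one kernel-verified Lean document; each statement's English description precedes it below -/
import Mathlib

section
/- The map d̃_i on permutations is an involution: applying d̃_i twice returns the original permutation. -/
open scoped Classical

/-- Swap the values `a` and `b` in a word. -/
def swapVals (a b : ℕ) (w : List ℕ) : List ℕ :=
  w.map fun x => if x = a then b else if x = b then a else x

/-- Elementary dual equivalence `d_i`: acts as the identity if `i` lies (positionally)
between `i-1` and `i+1`, and otherwise swaps `i` with the outermost of `i-1`, `i+1`. -/
def delem (i : ℕ) (w : List ℕ) : List ℕ :=
  let p := w.idxOf (i - 1)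
  let q := w.idxOf i
  let r := w.idxOf (i + 1)
  if (p < q ∧ q < r) ∨ (r < q ∧ q < p) then w
  else if (q < p ∧ p < r) ∨ (r < p ∧ p < q) then swapVals i (i + 1) w
  else swapVals i (i - 1) w

/-- The cyclic replacement `a ↦ b ↦ c ↦ a` on the letters of a word. -/
def cycVals (a b c : ℕ) (w : List ℕ) : List ℕ :=
  w.map fun x => if x = a then b else if x = b then c else if x = c then a else x

/-- The map `d̃_i`: identity if `i` lies between `i-1` and `i+1`, otherwise it cyclically
permutes the values `i-1, i, i+1` as in Assaf's construction. -/
def dtil (i : ℕ) (w : List ℕ) : List ℕ :=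
  let p := w.idxOf (i - 1)
  let q := w.idxOf i
  let r := w.idxOf (i + 1)
  if (p < q ∧ q < r) ∨ (r < q ∧ q < p) then w
  else if q < p ∧ q < r then
    (if p < r then cycVals i (i - 1) (i + 1) w else cycVals i (i + 1) (i - 1) w)
  else
    (if p < r then cycVals (i - 1) i (i + 1) w else cycVals (i + 1) i (i - 1) w)

/-- The standardization of a word: rank letters by value, ties broken left to right. -/
def stWord (w : List ℕ) : List ℕ :=
  (w.zipIdx.map Prod.swap).map fun p =>
    1 + ((w.zipIdx.map Prod.swap).filter fun q => q.2 < p.2 ∨ (q.2 = p.2 ∧ q.1 < p.1)).length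

/-- Unstandardization of a permutation: the value `i` is replaced by
`1 +` the number of `j < i` such that `j+1` occurs before `j`. -/
def unstPerm (π : List ℕ) : List ℕ :=
  π.map fun i =>
    1 + ((List.range (i - 1)).filter fun j => π.idxOf (j + 2) < π.idxOf (j + 1)).length

/-- Unstandardization of a word. -/
def unstWord (w : List ℕ) : List ℕ := unstPerm (stWord w)

/-- RSK row insertion of a value into a tableau (rows listed bottom row first). -/
def insertTab : List (List ℕ) → ℕ → List (List ℕ)
  | [], x => [[x]]
  | r :: rs, x =>
    match r.findIdx? (fun y => x < y) with
    | none => (r ++ [x]) :: rs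
    | some j => r.set j x :: insertTab rs (r.getD j 0)

/-- The RSK insertion tableau of a word. -/
def Ptab (w : List ℕ) : List (List ℕ) := w.foldl insertTab []

def UtabAux : ℕ → List ℕ → List (List ℕ)
  | _, [] => []
  | s, a :: rest => ((List.range a).map (· + s + 1)) :: UtabAux (s + a) rest

/-- The superstandard tableau `U_λ`: `1,…,n` filled along the rows of `λ`, bottom row first. -/
def Utab (lam : List ℕ) : List (List ℕ) := (UtabAux 0 lam).filter (· ≠ [])

/-- `w` is a Yamanouchi word of content `lam`. -/
def IsYam (lam : List ℕ) (w : List ℕ) : Prop :=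
  (∀ x ∈ w, 1 ≤ x) ∧
  (∀ i : ℕ, w.count (i + 1) = lam.getD i 0) ∧
  ∀ t : List ℕ, t <:+ w → ∀ i : ℕ, t.count (i + 2) ≤ t.count (i + 1)

/-- `lam` is a partition: weakly decreasing with positive parts. -/
def IsPartition (lam : List ℕ) : Prop :=
  lam.Pairwise (· ≥ ·) ∧ ∀ a ∈ lam, 0 < a

/-- Row reading word of a tableau (rows listed bottom first; read top row first). -/
def rwTab (T : List (List ℕ)) : List ℕ := T.reverse.flatten

def fillAux : List ℕ → List ℕ → List (List ℕ)
  | [], _ => []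
  | a :: rest, w => w.take a :: fillAux rest (w.drop a)

/-- Fill a shape (row lengths, bottom row first) with a word read in row reading order. -/
def fillTab (sh : List ℕ) (w : List ℕ) : List (List ℕ) := (fillAux sh.reverse w).reverse

/-- `T` is a standard Young tableau of partition shape (rows listed bottom first). -/
def IsSYT (T : List (List ℕ)) : Prop :=
  (T.map List.length).Pairwise (· ≥ ·) ∧ (∀ r ∈ T, r ≠ []) ∧
  (rwTab T).Perm (List.range' 1 (rwTab T).length) ∧
  (∀ r ∈ T, r.Pairwise (· < ·)) ∧
  ∀ k, k + 1 < T.length → ∀ j < (T.getD (k + 1) []).length,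
    (T.getD k []).getD j 0 < (T.getD (k + 1) []).getD j 0

/-- An elementary dual equivalence move on tableaux, via the row reading word. -/
def DEMove (T T' : List (List ℕ)) : Prop :=
  ∃ i, 1 < i ∧ i < (rwTab T).length ∧
    T' = fillTab (T.map List.length) (delem i (rwTab T))

/-- Dual equivalence of tableaux: the equivalence relation generated by the moves `d_i`. -/
def DualEquiv : List (List ℕ) → List (List ℕ) → Prop := Relation.EqvGen DEMove

/-- Row reading order on cells `(x, y)` of `ℤ × ℤ` (top rows first, left to right). -/
def ReadingOrder (c d : ℤ × ℤ) : Prop := d.2 < c.2 ∨ (c.2 = d.2 ∧ c.1 < d.1)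

/-- A diagram, presented as its list of cells in row reading order. -/
def IsDiagramList (δ : List (ℤ × ℤ)) : Prop := δ.Pairwise ReadingOrder

def leRO (c d : ℤ × ℤ) : Prop := c = d ∨ ReadingOrder c d

/-- `e` lies in the pistol of the cell `c`: between `c` and the position one row below `c`. -/
def InPistol (c e : ℤ × ℤ) : Prop := leRO c e ∧ leRO e (c.1, c.2 - 1)

/-- A set of indices (into the row reading order of `δ`) lies in a common pistol of `δ`. -/
def Pistoled (δ : List (ℤ × ℤ)) (S : List ℕ) : Prop :=
  ∃ c ∈ δ, ∀ i ∈ S, i < δ.length ∧ InPistol c (δ.getD i (0, 0))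

/-- The involution `D_i^δ` of Assaf. -/
noncomputable def Ddelta (δ : List (ℤ × ℤ)) (i : ℕ) (π : List ℕ) : List ℕ :=
  if Pistoled δ [π.idxOf (i - 1), π.idxOf i, π.idxOf (i + 1)] then dtil i π
  else delem i π

/-- The cell at index `j` of the filling `T_δ(w)` is a descent. -/
def IsDescentAt (δ : List (ℤ × ℤ)) (w : List ℕ) (j : ℕ) : Prop :=
  j < δ.length ∧ ∃ k < δ.length,
    δ.getD k (0, 0) = ((δ.getD j (0, 0)).1, (δ.getD j (0, 0)).2 - 1) ∧
    w.getD k 0 < w.getD j 0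

/-- The set of descent cells of the filling `T_δ(w)`. -/
def DesSet (δ : List (ℤ × ℤ)) (w : List ℕ) : Set (ℤ × ℤ) :=
  {c | ∃ j, j < δ.length ∧ δ.getD j (0, 0) = c ∧ IsDescentAt δ w j}

/-- Number of cells of `δ` strictly above `c` in its column. -/
def legOf (δ : List (ℤ × ℤ)) (c : ℤ × ℤ) : ℕ :=
  (δ.filter fun e => e.1 = c.1 ∧ c.2 < e.2).length

/-- The major index statistic `maj_δ`. -/
noncomputable def majD (δ : List (ℤ × ℤ)) (w : List ℕ) : ℕ :=
  ∑ j ∈ Finset.range δ.length,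
    if IsDescentAt δ w j then 1 + legOf δ (δ.getD j (0, 0)) else 0

/-- Indices `j < k` form an inversion triple of `T_δ(w)` (with the cell below `j`). -/
def InvTripleAt (δ : List (ℤ × ℤ)) (w : List ℕ) (j k : ℕ) : Prop :=
  j < k ∧ k < δ.length ∧
  (δ.getD j (0, 0)).2 = (δ.getD k (0, 0)).2 ∧
  ∃ m < δ.length, δ.getD m (0, 0) = ((δ.getD j (0, 0)).1, (δ.getD j (0, 0)).2 - 1) ∧
    ((w.getD m 0 < w.getD k 0 ∧ w.getD k 0 < w.getD j 0) ∨
     (w.getD j 0 ≤ w.getD m 0 ∧ w.getD m 0 < w.getD k 0) ∨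
     (w.getD k 0 < w.getD j 0 ∧ w.getD j 0 ≤ w.getD m 0))

/-- Inversion pair where the cell below the left cell is missing. -/
def InvPairBelowAt (δ : List (ℤ × ℤ)) (w : List ℕ) (j k : ℕ) : Prop :=
  j < k ∧ k < δ.length ∧
  (δ.getD j (0, 0)).2 = (δ.getD k (0, 0)).2 ∧
  ((δ.getD j (0, 0)).1, (δ.getD j (0, 0)).2 - 1) ∉ δ ∧
  w.getD k 0 < w.getD j 0

/-- Inversion pair where the upper-left cell of the triple is missing. -/
def InvPairAboveAt (δ : List (ℤ × ℤ)) (w : List ℕ) (k m : ℕ) : Prop :=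
  k < δ.length ∧ m < δ.length ∧
  (δ.getD k (0, 0)).2 = (δ.getD m (0, 0)).2 + 1 ∧
  (δ.getD m (0, 0)).1 < (δ.getD k (0, 0)).1 ∧
  ((δ.getD m (0, 0)).1, (δ.getD m (0, 0)).2 + 1) ∉ δ ∧
  w.getD m 0 < w.getD k 0

/-- The inversion statistic `inv_δ(w)`: inversion triples plus inversion pairs. -/
noncomputable def invD (δ : List (ℤ × ℤ)) (w : List ℕ) : ℕ :=
  ((Finset.range δ.length ×ˢ Finset.range δ.length).filter fun p =>
      InvTripleAt δ w p.1 p.2).card +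
  ((Finset.range δ.length ×ˢ Finset.range δ.length).filter fun p =>
      InvPairBelowAt δ w p.1 p.2).card +
  ((Finset.range δ.length ×ˢ Finset.range δ.length).filter fun p =>
      InvPairAboveAt δ w p.1 p.2).card

/-- The cells of the (French) partition diagram of `lam`, in row reading order. -/
def partitionDiagram (lam : List ℕ) : List (ℤ × ℤ) :=
  ((List.range lam.length).reverse.map fun r =>
    (List.range (lam.getD r 0)).map fun x => ((x : ℤ), (r : ℤ))).flatten

/-- Index (in `w`) of the `j`-th from last occurrence of the value `v` (`j ≥ 1`). -/
def posFromLast (w : List ℕ) (v j : ℕ) : ℕ :=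
  (((List.range w.length).filter fun p => w.getD p 0 = v).reverse).getD (j - 1) 0

/-- A Yamanouchi word `w` jams the diagram `δ`. -/
def Jams (δ : List (ℤ × ℤ)) (w : List ℕ) : Prop :=
  ∃ i j : ℕ, 1 ≤ i ∧ 1 ≤ j ∧ j ≤ w.count i ∧ j + 1 ≤ w.count (i + 1) ∧
    Pistoled δ [posFromLast w i j, posFromLast w (i + 1) (j + 1)]

/-- `p` occurs as a strict pattern of `π` at the (increasing) index list `idx`. -/
def StrictPatternAt (p : List ℕ) (π : List ℕ) (idx : List ℕ) : Prop :=
  idx.Pairwise (· < ·) ∧ (∀ i ∈ idx, i < π.length) ∧ idx.length = p.length ∧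
  ∃ k : ℕ, ∀ j < p.length, π.getD (idx.getD j 0) 0 = p.getD j 0 + k

/-- `γ` is a realizable descent set of `δ`. -/
def RealizableIn (γ : Finset (ℤ × ℤ)) (δ : List (ℤ × ℤ)) : Prop :=
  (∀ c ∈ γ, ((c.1, c.2 - 1) : ℤ × ℤ) ∈ δ) ∧
  ∀ x₁ x₂ lo hi : ℤ, x₁ < x₂ → lo < hi →
    ((x₁, hi) : ℤ × ℤ) ∉ γ → ((x₁, lo) : ℤ × ℤ) ∉ γ →
    (∀ j, lo < j → j < hi → ((x₁, j) : ℤ × ℤ) ∈ γ) →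
    ¬ ∀ j, lo < j → j ≤ hi → ((x₂, j) : ℤ × ℤ) ∈ γ

/-- Value of the leading filling at a cell: `1` plus the length of the maximal run of
cells of `γ` weakly below `c` in its column, i.e. `1` off a non-`γ` cell, and one plus
the value below on cells of `γ`. -/
noncomputable def wval (γ : Finset (ℤ × ℤ)) (c : ℤ × ℤ) : ℕ :=
  1 + ((Finset.range γ.card).filter fun m =>
    ∀ l ≤ m, ((c.1, c.2 - (l : ℤ)) : ℤ × ℤ) ∈ γ).card

/-! In a word containing `i - 1` and `i`, the positions of `i - 1`, `i`, `i + 1` are distinct; we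
name their relative order by the pattern it forms, e.g. `213` when `i` comes first, then `i - 1`,
then `i + 1`. Off the patterns `123` and `321`, `d̃_i` relabels the three values by a 3-cycle, and
relabelling permutes their positions: `213 ↔ 132` and `231 ↔ 312`. On the image `d̃_i` therefore
applies the inverse cycle, which undoes the first. -/

theorem List.idxOf_map_of_injective {α β : Type*} [BEq α] [LawfulBEq α] [BEq β] [LawfulBEq β]
    {f : α → β} (hf : Function.Injective f) (w : List α) (v : α) :
    (w.map f).idxOf (f v) = w.idxOf v := by
  simp only [List.idxOf, List.findIdx_map, Function.comp_def, hf.beq_eq]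

section cycVals

variable {a b c : ℕ}

theorem cycVals_fun_injective (hab : a ≠ b) (hbc : b ≠ c) (hac : a ≠ c) :
    Function.Injective fun x => if x = a then b else if x = b then c else if x = c then a else x := by
  intro x y h
  dsimp only at h
  split_ifs at h <;> omega

theorem idxOf_cycVals_fst (hab : a ≠ b) (hbc : b ≠ c) (hac : a ≠ c) (w : List ℕ) :
    (cycVals a b c w).idxOf a = w.idxOf c := by
  simpa [cycVals, hac.symm, hbc.symm] using
    List.idxOf_map_of_injective (cycVals_fun_injective hab hbc hac) w c

theorem idxOf_cycVals_snd (hab : a ≠ b) (hbc : b ≠ c) (hac : a ≠ c) (w : List ℕ) :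
    (cycVals a b c w).idxOf b = w.idxOf a := by
  simpa [cycVals] using List.idxOf_map_of_injective (cycVals_fun_injective hab hbc hac) w a

theorem idxOf_cycVals_thd (hab : a ≠ b) (hbc : b ≠ c) (hac : a ≠ c) (w : List ℕ) :
    (cycVals a b c w).idxOf c = w.idxOf b := by
  simpa [cycVals, hab.symm] using List.idxOf_map_of_injective (cycVals_fun_injective hab hbc hac) w b

theorem cycVals_cycVals (hab : a ≠ b) (hbc : b ≠ c) (hac : a ≠ c) (w : List ℕ) :
    cycVals b a c (cycVals a b c w) = w := by
  rw [cycVals, cycVals, List.map_map]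
  conv_rhs => rw [← List.map_id w]
  refine List.map_congr_left fun x _ => ?_
  dsimp only [Function.comp_apply, id]
  split_ifs <;> omega

end cycVals

section dtil

variable {i : ℕ} {w : List ℕ}

theorem dtil_eq_self_of_between
    (h : (w.idxOf (i - 1) < w.idxOf i ∧ w.idxOf i < w.idxOf (i + 1)) ∨
      (w.idxOf (i + 1) < w.idxOf i ∧ w.idxOf i < w.idxOf (i - 1))) :
    dtil i w = w := by
  unfold dtil
  exact if_pos h

theorem dtil_of_pattern_213 (hqp : w.idxOf i < w.idxOf (i - 1))
    (hpr : w.idxOf (i - 1) < w.idxOf (i + 1)) : dtil i w = cycVals i (i - 1) (i + 1) w := by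
  simp only [dtil]
  split_ifs <;> first | rfl | omega

theorem dtil_of_pattern_231 (hqr : w.idxOf i < w.idxOf (i + 1))
    (hrp : w.idxOf (i + 1) < w.idxOf (i - 1)) : dtil i w = cycVals i (i + 1) (i - 1) w := by
  simp only [dtil]
  split_ifs <;> first | rfl | omega

theorem dtil_of_pattern_132 (hpr : w.idxOf (i - 1) < w.idxOf (i + 1))
    (hrq : w.idxOf (i + 1) < w.idxOf i) : dtil i w = cycVals (i - 1) i (i + 1) w := by
  simp only [dtil]
  split_ifs <;> first | rfl | omega

theorem dtil_of_pattern_312 (hrp : w.idxOf (i + 1) < w.idxOf (i - 1))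
    (hpq : w.idxOf (i - 1) < w.idxOf i) : dtil i w = cycVals (i + 1) i (i - 1) w := by
  simp only [dtil]
  split_ifs <;> first | rfl | omega

theorem dtil_dtil (hi : 1 ≤ i) (hw₀ : i - 1 ∈ w) (hw₁ : i ∈ w) :
    dtil i (dtil i w) = w := by
  have hpq : w.idxOf (i - 1) ≠ w.idxOf i := fun h => by
    have := (List.idxOf_inj hw₀).mp h; omega
  have hqr : w.idxOf i ≠ w.idxOf (i + 1) := fun h => by
    have := (List.idxOf_inj hw₁).mp h; omega
  have hpr : w.idxOf (i - 1) ≠ w.idxOf (i + 1) := fun h => by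
    have := (List.idxOf_inj hw₀).mp h; omega
  by_cases hbetween : (w.idxOf (i - 1) < w.idxOf i ∧ w.idxOf i < w.idxOf (i + 1)) ∨
      (w.idxOf (i + 1) < w.idxOf i ∧ w.idxOf i < w.idxOf (i - 1))
  · rw [dtil_eq_self_of_between hbetween, dtil_eq_self_of_between hbetween]
  obtain h | h | h | h : (w.idxOf i < w.idxOf (i - 1) ∧ w.idxOf (i - 1) < w.idxOf (i + 1)) ∨
      (w.idxOf i < w.idxOf (i + 1) ∧ w.idxOf (i + 1) < w.idxOf (i - 1)) ∨
      (w.idxOf (i - 1) < w.idxOf (i + 1) ∧ w.idxOf (i + 1) < w.idxOf i) ∨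
      (w.idxOf (i + 1) < w.idxOf (i - 1) ∧ w.idxOf (i - 1) < w.idxOf i) := by omega
  · rw [dtil_of_pattern_213 h.1 h.2, dtil_of_pattern_132, cycVals_cycVals] <;>
      simp -failIfUnchanged (disch := omega) only [idxOf_cycVals_fst, idxOf_cycVals_snd,
        idxOf_cycVals_thd] <;> omega
  · rw [dtil_of_pattern_231 h.1 h.2, dtil_of_pattern_312, cycVals_cycVals] <;>
      simp -failIfUnchanged (disch := omega) only [idxOf_cycVals_fst, idxOf_cycVals_snd,
        idxOf_cycVals_thd] <;> omega
  · rw [dtil_of_pattern_132 h.1 h.2, dtil_of_pattern_213, cycVals_cycVals] <;>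
      simp -failIfUnchanged (disch := omega) only [idxOf_cycVals_fst, idxOf_cycVals_snd,
        idxOf_cycVals_thd] <;> omega
  · rw [dtil_of_pattern_312 h.1 h.2, dtil_of_pattern_231, cycVals_cycVals] <;>
      simp -failIfUnchanged (disch := omega) only [idxOf_cycVals_fst, idxOf_cycVals_snd,
        idxOf_cycVals_thd] <;> omega

end dtil

theorem dtil_involutive (n i : ℕ) (π : List ℕ)
    (hπ : π.Perm (List.range' 1 n)) (h1 : 1 < i) (h2 : i < n) :
    dtil i (dtil i π) = π := by
  have hmem : ∀ v, 1 ≤ v → v ≤ n → v ∈ π := fun v hv₁ hv₂ => by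
    rw [hπ.mem_iff, List.mem_range'_1]
    omega
  exact dtil_dtil (by omega) (hmem _ (by omega) (by omega)) (hmem _ (by omega) (by omega))
end

section
/- If π' = D_i^δ(π), then the fillings T_δ(π) and T_δ(π') have the same descent set: Des_δ(π) = Des_δ(π'). Consequently maj_δ is constant on orbits of D_i^δ. -/
open scoped Classical

/-!
On values, `D_i^δ` permutes `i - 1, i, i + 1` and fixes every other letter, so it can only
change the relative order of two entries that both carry one of these three letters. If the
cell `k` lies directly below the cell `j`, the pistol of `j` is exactly the reading-order
interval `[j, k]`. When the three letters do not share a pistol, `d_i` swaps two consecutive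
letters only if the third one lies between them in the reading word, which would put all three
in `[j, k]`. When they do share a pistol and `j`, `k` carry two of them, that pistol must be the
one of `j`; so `j` and `k` carry the first and the last of the three letters, and `d̃_i` keeps
the relative order of those two.
-/

lemma List.getD_map_of_lt {α β : Type*} {f : α → β} {w : List α} {t : ℕ} (ht : t < w.length)
    (d : α) (d' : β) : (w.map f).getD t d' = f (w.getD t d) := by
  rw [List.getD_eq_getElem _ _ ht, List.getD_eq_getElem _ _ (by simpa using ht),
    List.getElem_map]

lemma List.Nodup.getD_eq_iff_eq_idxOf {α : Type*} [BEq α] [LawfulBEq α] {w : List α}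
    (hw : w.Nodup) {t : ℕ} (ht : t < w.length) (d a : α) : w.getD t d = a ↔ t = w.idxOf a := by
  rw [List.getD_eq_getElem _ _ ht]
  constructor
  · rintro rfl
    exact (hw.idxOf_getElem t ht).symm
  · rintro rfl
    exact List.getElem_idxOf ht

theorem delem_getD_lt_getD_iff {w : List ℕ} (hw : w.Nodup) {i j k : ℕ}
    (hjk : j < k) (hk : k < w.length)
    (hspan : ¬ ∀ t ∈ [w.idxOf (i - 1), w.idxOf i, w.idxOf (i + 1)], j ≤ t ∧ t ≤ k) :
    (delem i w).getD k 0 < (delem i w).getD j 0 ↔ w.getD k 0 < w.getD j 0 := by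
  simp only [List.mem_cons, List.not_mem_nil, forall_eq_or_imp, or_false, forall_eq] at hspan
  have hjv := hw.getD_eq_iff_eq_idxOf (hjk.trans hk) 0
  have hkv := hw.getD_eq_iff_eq_idxOf hk 0
  have hj₁ := hjv (i - 1); have hj₂ := hjv i; have hj₃ := hjv (i + 1)
  have hk₁ := hkv (i - 1); have hk₂ := hkv i; have hk₃ := hkv (i + 1)
  dsimp only [delem, swapVals]
  split_ifs
  · rfl
  all_goals
    rw [List.getD_map_of_lt (by omega) 0, List.getD_map_of_lt (by omega) 0]
    split_ifs <;> omega

theorem dtil_getD_lt_getD_iff {w : List ℕ} (hw : w.Nodup) {i j k : ℕ} (hi : 0 < i)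
    (hjk : j < k) (hk : k < w.length)
    (hspan : j ∈ [w.idxOf (i - 1), w.idxOf i, w.idxOf (i + 1)] →
      k ∈ [w.idxOf (i - 1), w.idxOf i, w.idxOf (i + 1)] →
      ∀ t ∈ [w.idxOf (i - 1), w.idxOf i, w.idxOf (i + 1)], j ≤ t ∧ t ≤ k) :
    (dtil i w).getD k 0 < (dtil i w).getD j 0 ↔ w.getD k 0 < w.getD j 0 := by
  simp only [List.mem_cons, List.not_mem_nil, forall_eq_or_imp, or_false, forall_eq] at hspan
  have hjv := hw.getD_eq_iff_eq_idxOf (hjk.trans hk) 0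
  have hkv := hw.getD_eq_iff_eq_idxOf hk 0
  have hj₁ := hjv (i - 1); have hj₂ := hjv i; have hj₃ := hjv (i + 1)
  have hk₁ := hkv (i - 1); have hk₂ := hkv i; have hk₃ := hkv (i + 1)
  dsimp only [dtil, cycVals]
  split_ifs
  · rfl
  all_goals
    rw [List.getD_map_of_lt (by omega) 0, List.getD_map_of_lt (by omega) 0]
    split_ifs <;> omega

lemma ReadingOrder.asymm {c d : ℤ × ℤ} (h : ReadingOrder c d) : ¬ ReadingOrder d c := by
  unfold ReadingOrder at *; omega

lemma leRO_antisymm {c d : ℤ × ℤ} (h : leRO c d) (h' : leRO d c) : c = d := by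
  rcases h with h | h
  · exact h
  · rcases h' with h' | h'
    · exact h'.symm
    · exact absurd h' h.asymm

lemma leRO_below_iff {c d : ℤ × ℤ} : leRO (c.1, c.2 - 1) (d.1, d.2 - 1) ↔ leRO c d := by
  simp only [leRO, ReadingOrder, Prod.ext_iff]
  omega

lemma leRO_iff_not_readingOrder {c d : ℤ × ℤ} : leRO c d ↔ ¬ ReadingOrder d c := by
  simp only [leRO, ReadingOrder, Prod.ext_iff]
  omega

namespace IsDiagramList

variable {δ : List (ℤ × ℤ)}

lemma readingOrder_getD (hδ : IsDiagramList δ) {s t : ℕ} (hst : s < t) (ht : t < δ.length) :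
    ReadingOrder (δ.getD s (0, 0)) (δ.getD t (0, 0)) := by
  rw [List.getD_eq_getElem _ _ (hst.trans ht), List.getD_eq_getElem _ _ ht]
  exact List.pairwise_iff_getElem.mp hδ s t _ _ hst

lemma readingOrder_getD_iff (hδ : IsDiagramList δ) {s t : ℕ} (hs : s < δ.length)
    (ht : t < δ.length) : ReadingOrder (δ.getD s (0, 0)) (δ.getD t (0, 0)) ↔ s < t := by
  refine ⟨fun h => ?_, fun hst => hδ.readingOrder_getD hst ht⟩
  by_contra! hts
  rcases hts.eq_or_lt with rfl | hlt
  · exact h.asymm h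
  · exact h.asymm (hδ.readingOrder_getD hlt hs)

lemma leRO_getD_iff (hδ : IsDiagramList δ) {s t : ℕ} (hs : s < δ.length) (ht : t < δ.length) :
    leRO (δ.getD s (0, 0)) (δ.getD t (0, 0)) ↔ s ≤ t := by
  rw [leRO_iff_not_readingOrder, hδ.readingOrder_getD_iff ht hs, not_lt]

lemma pistoled_of_forall_mem (hδ : IsDiagramList δ) {S : List ℕ} {j k : ℕ} (hj : j < δ.length)
    (hk : k < δ.length)
    (hbelow : δ.getD k (0, 0) = ((δ.getD j (0, 0)).1, (δ.getD j (0, 0)).2 - 1))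
    (hS : ∀ t ∈ S, j ≤ t ∧ t ≤ k) : Pistoled δ S := by
  have hjδ : δ.getD j (0, 0) ∈ δ := by
    rw [List.getD_eq_getElem _ _ hj]
    exact List.getElem_mem hj
  refine ⟨δ.getD j (0, 0), hjδ, fun t ht => ?_⟩
  obtain ⟨hjt, htk⟩ := hS t ht
  have ht : t < δ.length := htk.trans_lt hk
  refine ⟨ht, (hδ.leRO_getD_iff hj ht).mpr hjt, ?_⟩
  rw [← hbelow]
  exact (hδ.leRO_getD_iff ht hk).mpr htk

lemma forall_mem_of_pistoled (hδ : IsDiagramList δ) {S : List ℕ} {j k : ℕ} (hj : j < δ.length)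
    (hk : k < δ.length)
    (hbelow : δ.getD k (0, 0) = ((δ.getD j (0, 0)).1, (δ.getD j (0, 0)).2 - 1))
    (hP : Pistoled δ S) (hjS : j ∈ S) (hkS : k ∈ S) : ∀ t ∈ S, j ≤ t ∧ t ≤ k := by
  obtain ⟨c, -, hc⟩ := hP
  have hcj : c = δ.getD j (0, 0) := by
    refine leRO_antisymm (hc j hjS).2.1 (leRO_below_iff.mp ?_)
    rw [← hbelow]
    exact (hc k hkS).2.2
  intro t ht
  obtain ⟨ht, hct, htc⟩ := hc t ht
  rw [hcj] at hct htc
  rw [← hbelow] at htc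
  exact ⟨(hδ.leRO_getD_iff hj ht).mp hct, (hδ.leRO_getD_iff ht hk).mp htc⟩

end IsDiagramList

theorem Ddelta_getD_lt_getD_iff {δ : List (ℤ × ℤ)} (hδ : IsDiagramList δ) {i : ℕ} {π : List ℕ}
    (hπ : π.Nodup) (hlen : π.length = δ.length) (hi : 0 < i) {j k : ℕ} (hj : j < δ.length)
    (hk : k < δ.length)
    (hbelow : δ.getD k (0, 0) = ((δ.getD j (0, 0)).1, (δ.getD j (0, 0)).2 - 1)) :
    (Ddelta δ i π).getD k 0 < (Ddelta δ i π).getD j 0 ↔ π.getD k 0 < π.getD j 0 := by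
  have hjk : j < k := (hδ.readingOrder_getD_iff hj hk).mp (by rw [hbelow]; left; simp)
  unfold Ddelta
  split_ifs with hP
  · exact dtil_getD_lt_getD_iff hπ hi hjk (hlen ▸ hk)
      (hδ.forall_mem_of_pistoled hj hk hbelow hP)
  · exact delem_getD_lt_getD_iff hπ hjk (hlen ▸ hk)
      (fun hS => hP (hδ.pistoled_of_forall_mem hj hk hbelow hS))

theorem isDescentAt_Ddelta_iff {δ : List (ℤ × ℤ)} (hδ : IsDiagramList δ) {i : ℕ} {π : List ℕ}
    (hπ : π.Nodup) (hlen : π.length = δ.length) (hi : 0 < i) (j : ℕ) :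
    IsDescentAt δ (Ddelta δ i π) j ↔ IsDescentAt δ π j := by
  unfold IsDescentAt
  refine and_congr_right fun hj => exists_congr fun k => and_congr_right fun hk =>
    and_congr_right fun hbelow => Ddelta_getD_lt_getD_iff hδ hπ hlen hi hj hk hbelow

theorem Ddelta_preserves_des_general (δ : List (ℤ × ℤ)) (hδ : IsDiagramList δ) (i : ℕ)
    (π π' : List ℕ) (hπ : π.Perm (List.range' 1 δ.length))
    (h1 : 1 < i) (hπ' : π' = Ddelta δ i π) :
    DesSet δ π = DesSet δ π' ∧ majD δ π = majD δ π' := by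
  have hdes : ∀ j, IsDescentAt δ π' j ↔ IsDescentAt δ π j := by
    subst hπ'
    exact isDescentAt_Ddelta_iff hδ (hπ.nodup_iff.mpr List.nodup_range')
      (by simpa using hπ.length_eq) (by omega)
  exact ⟨by simp only [DesSet, hdes], by simp only [majD, hdes]⟩

theorem Ddelta_preserves_des (δ : List (ℤ × ℤ)) (hδ : IsDiagramList δ) (i : ℕ)
    (π π' : List ℕ) (hπ : π.Perm (List.range' 1 δ.length))
    (h1 : 1 < i) (h2 : i < δ.length) (hπ' : π' = Ddelta δ i π) :
    DesSet δ π = DesSet δ π' ∧ majD δ π = majD δ π' :=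
  Ddelta_preserves_des_general δ hδ i π π' hπ h1 hπ'
end

section
/- If π' = D_i^δ(π), then inv_δ(π) = inv_δ(π'), i.e., the inversion statistic is constant on orbits of D_i^δ. -/
open scoped Classical

/-!
Every inversion triple and every inversion pair is decided by comparing the entries of two
cells. For a triple `(c, d, e)` with distinct entries, one or two of the cyclic comparisons
`T c > T d`, `T d > T e`, `T e > T c` hold, and two hold exactly for an inversion triple.
Summing over triples and pairs, `inv_δ(π)` plus the number of triples of `δ` (independent
of `π`) becomes a weighted count `∑ N(u, v) [π u > π v]` over pairs of cells. The weight
`N(u, v)` vanishes unless `u` and `v` lie in a common pistol, and inside a pistol it is `1`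
for `u` before `v` and `0` for `v` before `u`, except for the two ends of the pistol.

Exchanging two consecutive values `a, a + 1` sitting in cells `x, y` flips only the
comparison of `x` and `y`, so it changes the weighted count by `N(x, y) - N(y, x)`. Off a
pistol, `d_i` exchanges the values in the two outer cells among those holding
`i - 1, i, i + 1`; these two cells are not in a common pistol, so nothing changes. In a
pistol, `d̃_i` is a 3-cycle of the values, a product of two such exchanges each involving
the middle cell, and their contributions `±1` cancel.
-/

namespace Diagram

variable (δ : List (ℤ × ℤ))

def cell (j : ℕ) : ℤ × ℤ := δ.getD j (0, 0)

def cellBelow (j : ℕ) : ℤ × ℤ := ((cell δ j).1, (cell δ j).2 - 1)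

def cellAbove (j : ℕ) : ℤ × ℤ := ((cell δ j).1, (cell δ j).2 + 1)

def SameRowLeft (u v : ℕ) : Prop := (cell δ u).2 = (cell δ v).2 ∧ (cell δ u).1 < (cell δ v).1

def UpRight (u v : ℕ) : Prop := (cell δ u).2 = (cell δ v).2 + 1 ∧ (cell δ v).1 < (cell δ u).1

noncomputable def numRightInRow (v : ℕ) : ℕ :=
  ((Finset.range δ.length).filter fun k => v < k ∧ (cell δ k).2 = (cell δ v).2).card

/-- The number of triples and pairs of `inv_δ` whose defining condition contains the
comparison `T u > T v`: as `(c, d)` in a row, as `(d, e)` with `v = e` below a possibly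
missing `c`, and as `(e, c)` with `v = c`, once for each `d` to the right of `c`. -/
noncomputable def pairWeight (u v : ℕ) : ℕ :=
  (if SameRowLeft δ u v then 1 else 0) + (if UpRight δ u v then 1 else 0) +
    (if cell δ u = cellBelow δ v then numRightInRow δ v else 0)

def gtInd (w : List ℕ) (u v : ℕ) : ℕ := if w.getD v 0 < w.getD u 0 then 1 else 0

abbrev idxPairs (n : ℕ) : Finset (ℕ × ℕ) := Finset.range n ×ˢ Finset.range n

noncomputable def weightedInv (w : List ℕ) : ℕ :=
  ∑ x ∈ idxPairs δ.length, pairWeight δ x.1 x.2 * gtInd w x.1 x.2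

def IsTripleCfg (j k : ℕ) : Prop :=
  j < k ∧ k < δ.length ∧ (cell δ j).2 = (cell δ k).2 ∧ cellBelow δ j ∈ δ

noncomputable def numTripleCfg : ℕ :=
  ((idxPairs δ.length).filter fun x => IsTripleCfg δ x.1 x.2).card

/-- `x, y, z` are the entries of the cells `c, d, e` of an inversion triple. -/
def IsInvPattern (x y z : ℕ) : Prop := (z < y ∧ y < x) ∨ (x ≤ z ∧ z < y) ∨ (y < x ∧ x ≤ z)

lemma ite_isInvPattern_add_one {x y z : ℕ} (hzx : z ≠ x) :
    (if IsInvPattern x y z then 1 else 0) + 1 =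
      (if y < x then 1 else 0) + (if z < y then 1 else 0) + (if x < z then 1 else 0) := by
  unfold IsInvPattern
  split_ifs <;> omega

lemma mem_idxPairs {n : ℕ} {x : ℕ × ℕ} : x ∈ idxPairs n ↔ x.1 < n ∧ x.2 < n := by
  simp [idxPairs]

lemma cell_mem {j : ℕ} (hj : j < δ.length) : cell δ j ∈ δ := by
  rw [cell, List.getD_eq_getElem _ _ hj]
  exact List.getElem_mem _

lemma idxOf_lt {c : ℤ × ℤ} (h : c ∈ δ) : δ.idxOf c < δ.length :=
  List.idxOf_lt_length_iff.mpr h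

lemma cell_idxOf {c : ℤ × ℤ} (h : c ∈ δ) : cell δ (δ.idxOf c) = c := by
  rw [cell, List.getD_eq_getElem _ _ (idxOf_lt δ h)]
  exact List.getElem_idxOf _

lemma cell_eq_cellBelow_iff {m j : ℕ} :
    cell δ m = cellBelow δ j ↔ (cell δ m).1 = (cell δ j).1 ∧ (cell δ m).2 + 1 = (cell δ j).2 := by
  simp only [cellBelow, Prod.ext_iff]
  omega

lemma cell_eq_cellAbove_iff {m j : ℕ} :
    cell δ m = cellAbove δ j ↔ (cell δ m).1 = (cell δ j).1 ∧ (cell δ m).2 = (cell δ j).2 + 1 := by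
  simp only [cellAbove, Prod.ext_iff]

lemma cellAbove_eq_iff {m j : ℕ} : cellAbove δ m = cell δ j ↔ cell δ m = cellBelow δ j := by
  simp only [cellAbove, cellBelow, Prod.ext_iff]
  omega

lemma cellBelow_eq_iff {m j : ℕ} : cellBelow δ m = cell δ j ↔ cell δ m = cellAbove δ j := by
  simp only [cellAbove, cellBelow, Prod.ext_iff]
  omega

lemma invPairBelowAt_iff {w : List ℕ} {j k : ℕ} : InvPairBelowAt δ w j k ↔
    j < k ∧ k < δ.length ∧ (cell δ j).2 = (cell δ k).2 ∧ cellBelow δ j ∉ δ ∧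
      w.getD k 0 < w.getD j 0 := Iff.rfl

lemma invPairAboveAt_iff {w : List ℕ} {u v : ℕ} : InvPairAboveAt δ w u v ↔
    u < δ.length ∧ v < δ.length ∧ UpRight δ u v ∧ cellAbove δ v ∉ δ ∧
      w.getD v 0 < w.getD u 0 := by
  simp only [InvPairAboveAt, UpRight, and_assoc]
  rfl

lemma leRO_iff (c d : ℤ × ℤ) : leRO c d ↔ d.2 < c.2 ∨ (c.2 = d.2 ∧ c.1 ≤ d.1) := by
  simp only [leRO, ReadingOrder, Prod.ext_iff]
  omega

lemma inPistol_iff (c e : ℤ × ℤ) :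
    InPistol c e ↔ (e.2 = c.2 ∧ c.1 ≤ e.1) ∨ (e.2 = c.2 - 1 ∧ e.1 ≤ c.1) := by
  rw [InPistol, leRO_iff, leRO_iff]
  omega

section ReadingOrder

variable {δ} (hδ : IsDiagramList δ)
include hδ

lemma nodup_of_isDiagramList : δ.Nodup :=
  hδ.imp fun h hab => by subst hab; unfold ReadingOrder at h; omega

lemma readingOrder_cell {u v : ℕ} (huv : u < v) (hv : v < δ.length) :
    ReadingOrder (cell δ u) (cell δ v) := by
  simp only [cell, List.getD_eq_getElem _ _ hv, List.getD_eq_getElem _ _ (huv.trans hv)]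
  exact List.pairwise_iff_getElem.mp hδ _ _ _ _ huv

lemma eq_of_cell_eq {u v : ℕ} (hu : u < δ.length) (hv : v < δ.length)
    (h : cell δ u = cell δ v) : u = v := by
  simp only [cell, List.getD_eq_getElem _ _ hu, List.getD_eq_getElem _ _ hv] at h
  exact (nodup_of_isDiagramList hδ).getElem_inj_iff.mp h

lemma lt_of_readingOrder_cell {u v : ℕ} (hu : u < δ.length)
    (h : ReadingOrder (cell δ u) (cell δ v)) : u < v := by
  by_contra! hvu
  rcases hvu.eq_or_lt with rfl | hvu
  · unfold ReadingOrder at h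
    omega
  · have := readingOrder_cell hδ hvu hu
    unfold ReadingOrder at h this
    omega

lemma eq_idxOf_of_cell_eq {m : ℕ} {c : ℤ × ℤ} (hm : m < δ.length) (h : cell δ m = c) :
    m = δ.idxOf c := by
  have hc : c ∈ δ := h ▸ cell_mem δ hm
  exact eq_of_cell_eq hδ hm (idxOf_lt δ hc) (h.trans (cell_idxOf δ hc).symm)

lemma idxOf_cell {j : ℕ} (hj : j < δ.length) : δ.idxOf (cell δ j) = j :=
  (eq_idxOf_of_cell_eq hδ hj rfl).symm

lemma sameRowLeft_iff {u v : ℕ} (hu : u < δ.length) (hv : v < δ.length) :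
    SameRowLeft δ u v ↔ u < v ∧ (cell δ u).2 = (cell δ v).2 := by
  constructor
  · rintro ⟨hrow, hcol⟩
    exact ⟨lt_of_readingOrder_cell hδ hu (Or.inr ⟨hrow, hcol⟩), hrow⟩
  · rintro ⟨huv, hrow⟩
    have := readingOrder_cell hδ huv hv
    unfold ReadingOrder at this
    exact ⟨hrow, by omega⟩

end ReadingOrder

section Decomposition

variable {δ} (hδ : IsDiagramList δ)
include hδ

lemma invTripleAt_iff (w : List ℕ) {j k : ℕ} :
    InvTripleAt δ w j k ↔ IsTripleCfg δ j k ∧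
      IsInvPattern (w.getD j 0) (w.getD k 0) (w.getD (δ.idxOf (cellBelow δ j)) 0) := by
  constructor
  · rintro ⟨hjk, hk, hrow, m, hm, hcell, hpat⟩
    replace hcell : cell δ m = cellBelow δ j := hcell
    have hbel : cellBelow δ j ∈ δ := hcell ▸ cell_mem δ hm
    obtain rfl := eq_idxOf_of_cell_eq hδ hm hcell
    exact ⟨⟨hjk, hk, hrow, hbel⟩, hpat⟩
  · rintro ⟨⟨hjk, hk, hrow, hbel⟩, hpat⟩
    exact ⟨hjk, hk, hrow, _, idxOf_lt δ hbel, cell_idxOf δ hbel, hpat⟩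

lemma card_invTripleAt_add_numTripleCfg {w : List ℕ} (hw : w.Nodup) (hlen : δ.length ≤ w.length) :
    ((idxPairs δ.length).filter fun x => InvTripleAt δ w x.1 x.2).card + numTripleCfg δ =
      ∑ x ∈ idxPairs δ.length, if IsTripleCfg δ x.1 x.2 then
        gtInd w x.1 x.2 + gtInd w x.2 (δ.idxOf (cellBelow δ x.1)) +
          gtInd w (δ.idxOf (cellBelow δ x.1)) x.1 else 0 := by
  rw [Finset.card_filter, numTripleCfg, Finset.card_filter, ← Finset.sum_add_distrib]
  refine Finset.sum_congr rfl fun ⟨j, k⟩ _ => ?_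
  by_cases hcfg : IsTripleCfg δ j k
  · simp only [invTripleAt_iff hδ, hcfg, true_and, if_true]
    obtain ⟨hjk, hk, -, hbel⟩ := hcfg
    have hm := idxOf_lt δ hbel
    have hrow_m : (cell δ (δ.idxOf (cellBelow δ j))).2 = (cell δ j).2 - 1 := by
      rw [cell_idxOf δ hbel, cellBelow]
    refine ite_isInvPattern_add_one fun h => ?_
    rw [List.getD_eq_getElem _ _ (by omega), List.getD_eq_getElem _ _ (by omega),
      hw.getElem_inj_iff] at h
    rw [h] at hrow_m
    omega
  · simp only [invTripleAt_iff hδ, hcfg, false_and, if_false]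

lemma card_invPairBelowAt_add_sum_tripleCfg (w : List ℕ) :
    ((idxPairs δ.length).filter fun x => InvPairBelowAt δ w x.1 x.2).card +
        (∑ x ∈ idxPairs δ.length, if IsTripleCfg δ x.1 x.2 then gtInd w x.1 x.2 else 0) =
      ∑ x ∈ idxPairs δ.length, (if SameRowLeft δ x.1 x.2 then 1 else 0) * gtInd w x.1 x.2 := by
  rw [Finset.card_filter, ← Finset.sum_add_distrib]
  refine Finset.sum_congr rfl fun ⟨j, k⟩ hx => ?_
  obtain ⟨hj, hk⟩ := mem_idxPairs.mp hx
  rw [invPairBelowAt_iff, sameRowLeft_iff hδ hj hk]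
  unfold IsTripleCfg gtInd
  split_ifs <;> first | rfl | tauto

lemma sum_tripleCfg_eq_sum_upRight (w : List ℕ) :
    (∑ x ∈ idxPairs δ.length,
        if IsTripleCfg δ x.1 x.2 then gtInd w x.2 (δ.idxOf (cellBelow δ x.1)) else 0) =
      ∑ x ∈ idxPairs δ.length,
        if UpRight δ x.1 x.2 ∧ cellAbove δ x.2 ∈ δ then gtInd w x.1 x.2 else 0 := by
  rw [← Finset.sum_filter, ← Finset.sum_filter]
  refine Finset.sum_nbij' (fun x => (x.2, δ.idxOf (cellBelow δ x.1)))
    (fun y => (δ.idxOf (cellAbove δ y.2), y.1)) ?_ ?_ ?_ ?_ fun _ _ => rfl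
  · rintro ⟨j, k⟩ hx
    simp only [Finset.mem_filter, mem_idxPairs] at hx ⊢
    obtain ⟨⟨hj, -⟩, hjk, hk, hrow, hbel⟩ := hx
    have hm := (cell_eq_cellBelow_iff δ).mp (cell_idxOf δ hbel)
    have hcol := ((sameRowLeft_iff hδ hj hk).mpr ⟨hjk, hrow⟩).2
    refine ⟨⟨hk, idxOf_lt δ hbel⟩, ⟨by omega, by omega⟩, ?_⟩
    rw [(cellAbove_eq_iff δ).mpr (cell_idxOf δ hbel)]
    exact cell_mem δ hj
  · rintro ⟨u, v⟩ hy
    simp only [Finset.mem_filter, mem_idxPairs] at hy ⊢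
    obtain ⟨⟨hu, hv⟩, ⟨hrow, hcol⟩, habove⟩ := hy
    have ha := (cell_eq_cellAbove_iff δ).mp (cell_idxOf δ habove)
    have hlt := lt_of_readingOrder_cell hδ (idxOf_lt δ habove) (v := u)
      (Or.inr ⟨by omega, by omega⟩)
    refine ⟨⟨idxOf_lt δ habove, hu⟩, hlt, hu, by omega, ?_⟩
    rw [(cellBelow_eq_iff δ).mpr (cell_idxOf δ habove)]
    exact cell_mem δ hv
  · rintro ⟨j, k⟩ hx
    simp only [Finset.mem_filter, mem_idxPairs] at hx
    rw [(cellAbove_eq_iff δ).mpr (cell_idxOf δ hx.2.2.2.2), idxOf_cell hδ hx.1.1]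
  · rintro ⟨u, v⟩ hy
    simp only [Finset.mem_filter, mem_idxPairs] at hy
    rw [(cellBelow_eq_iff δ).mpr (cell_idxOf δ hy.2.2), idxOf_cell hδ hy.1.2]

lemma card_invPairAboveAt_add_sum_tripleCfg (w : List ℕ) :
    ((idxPairs δ.length).filter fun x => InvPairAboveAt δ w x.1 x.2).card +
        (∑ x ∈ idxPairs δ.length,
          if IsTripleCfg δ x.1 x.2 then gtInd w x.2 (δ.idxOf (cellBelow δ x.1)) else 0) =
      ∑ x ∈ idxPairs δ.length, (if UpRight δ x.1 x.2 then 1 else 0) * gtInd w x.1 x.2 := by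
  rw [sum_tripleCfg_eq_sum_upRight hδ, Finset.card_filter, ← Finset.sum_add_distrib]
  refine Finset.sum_congr rfl fun ⟨u, v⟩ hx => ?_
  obtain ⟨hu, hv⟩ := mem_idxPairs.mp hx
  rw [invPairAboveAt_iff]
  unfold gtInd
  split_ifs <;> first | rfl | tauto

lemma sum_tripleCfg_eq_sum_below (w : List ℕ) :
    (∑ x ∈ idxPairs δ.length,
        if IsTripleCfg δ x.1 x.2 then gtInd w (δ.idxOf (cellBelow δ x.1)) x.1 else 0) =
      ∑ x ∈ idxPairs δ.length,
        (if cell δ x.1 = cellBelow δ x.2 then numRightInRow δ x.2 else 0) * gtInd w x.1 x.2 := by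
  rw [Finset.sum_product, Finset.sum_product_right]
  refine Finset.sum_congr rfl fun j _ => ?_
  dsimp only
  by_cases hbel : cellBelow δ j ∈ δ
  · rw [← Finset.sum_filter, Finset.sum_const, smul_eq_mul,
      Finset.sum_eq_single_of_mem _ (Finset.mem_range.mpr (idxOf_lt δ hbel)),
      if_pos (cell_idxOf δ hbel)]
    · congr 1
      refine congrArg Finset.card (Finset.filter_congr fun k hk => ?_)
      simp only [IsTripleCfg, Finset.mem_range.mp hk, hbel, eq_comm (a := (cell δ j).2)]
      tauto
    · intro u hu hne
      rw [if_neg fun h => hne (eq_idxOf_of_cell_eq hδ (Finset.mem_range.mp hu) h), zero_mul]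
  · rw [Finset.sum_eq_zero fun k _ => if_neg fun h => hbel h.2.2.2,
      Finset.sum_eq_zero fun u hu => ?_]
    rw [if_neg fun (h : cell δ u = cellBelow δ j) =>
      hbel (h ▸ cell_mem δ (Finset.mem_range.mp hu)), zero_mul]

theorem invD_add_numTripleCfg {w : List ℕ} (hw : w.Nodup) (hlen : δ.length ≤ w.length) :
    invD δ w + numTripleCfg δ = weightedInv δ w := by
  have htriple := card_invTripleAt_add_numTripleCfg hδ hw hlen
  have hrow := card_invPairBelowAt_add_sum_tripleCfg hδ w
  have hup := card_invPairAboveAt_add_sum_tripleCfg hδ w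
  have hbelow := sum_tripleCfg_eq_sum_below hδ w
  simp only [ite_add_zero, Finset.sum_add_distrib] at htriple
  have hweight : weightedInv δ w =
      (∑ x ∈ idxPairs δ.length, (if SameRowLeft δ x.1 x.2 then 1 else 0) * gtInd w x.1 x.2) +
      (∑ x ∈ idxPairs δ.length, (if UpRight δ x.1 x.2 then 1 else 0) * gtInd w x.1 x.2) +
      ∑ x ∈ idxPairs δ.length,
        (if cell δ x.1 = cellBelow δ x.2 then numRightInRow δ x.2 else 0) * gtInd w x.1 x.2 := by
    simp only [weightedInv, pairWeight, add_mul, Finset.sum_add_distrib]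
  rw [hweight, invD]
  simp only [idxPairs] at htriple hrow hup hbelow ⊢
  omega

theorem invD_eq_of_weightedInv_eq {w w' : List ℕ} (hw : w.Nodup) (hw' : w'.Nodup)
    (hlen : δ.length ≤ w.length) (hlen' : δ.length ≤ w'.length)
    (h : weightedInv δ w = weightedInv δ w') : invD δ w = invD δ w' := by
  have := invD_add_numTripleCfg hδ hw hlen
  have := invD_add_numTripleCfg hδ hw' hlen'
  omega

end Decomposition

lemma getD_map_of_lt {α β : Type*} {l : List α} (f : α → β) {n : ℕ} (hn : n < l.length)
    (d : α) (e : β) : (l.map f).getD n e = f (l.getD n d) := by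
  rw [List.getD_eq_getElem _ _ (by simpa), List.getD_eq_getElem _ _ hn, List.getElem_map]

lemma getD_idxOf {w : List ℕ} {v : ℕ} (h : v ∈ w) : w.getD (w.idxOf v) 0 = v := by
  rw [List.getD_eq_getElem _ _ (List.idxOf_lt_length_iff.mpr h)]
  exact List.getElem_idxOf _

lemma eq_of_getD_eq {w : List ℕ} (hw : w.Nodup) {u v : ℕ} (hu : u < w.length)
    (hv : v < w.length) (h : w.getD u 0 = w.getD v 0) : u = v := by
  rwa [List.getD_eq_getElem _ _ hu, List.getD_eq_getElem _ _ hv, hw.getElem_inj_iff] at h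

lemma swapVals_eq_map (a b : ℕ) (w : List ℕ) : swapVals a b w = w.map (Equiv.swap a b) := by
  simp only [swapVals, ← Equiv.swap_apply_def]

lemma cycVals_eq_map_map_swap {a b c : ℕ} (hab : a ≠ b) (hac : a ≠ c) (hbc : b ≠ c)
    (w : List ℕ) : cycVals a b c w = (w.map (Equiv.swap a b)).map (Equiv.swap a c) := by
  simp only [cycVals, List.map_map]
  refine List.map_congr_left fun x _ => ?_
  simp only [Function.comp_apply, Equiv.swap_apply_def]
  split_ifs <;> omega

lemma cycVals_rotate {a b c : ℕ} (hab : a ≠ b) (hac : a ≠ c) (hbc : b ≠ c) (w : List ℕ) :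
    cycVals a b c w = cycVals b c a w := by
  simp only [cycVals]
  refine List.map_congr_left fun x _ => ?_
  split_ifs <;> omega

lemma gtInd_map_swap {w : List ℕ} {a u v : ℕ} (hu : u < w.length) (hv : v < w.length)
    (h : ¬(w.getD u 0 = a ∧ w.getD v 0 = a + 1)) (h' : ¬(w.getD u 0 = a + 1 ∧ w.getD v 0 = a)) :
    gtInd (w.map (Equiv.swap a (a + 1))) u v = gtInd w u v := by
  simp only [gtInd, getD_map_of_lt _ hu 0, getD_map_of_lt _ hv 0, Equiv.swap_apply_def]
  split_ifs <;> omega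

lemma cycVals_eq_map_perm {a b c : ℕ} (hab : a ≠ b) (hac : a ≠ c) (hbc : b ≠ c)
    (w : List ℕ) : cycVals a b c w = w.map (Equiv.swap a c * Equiv.swap a b) := by
  rw [cycVals_eq_map_map_swap hab hac hbc, List.map_map, Equiv.Perm.coe_mul]

lemma exists_perm_Ddelta (i : ℕ) (hi : 1 ≤ i) (w : List ℕ) :
    ∃ σ : Equiv.Perm ℕ, Ddelta δ i w = w.map σ := by
  unfold Ddelta dtil delem
  dsimp only
  split_ifs <;> first
    | exact ⟨_, swapVals_eq_map _ _ w⟩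
    | exact ⟨_, cycVals_eq_map_perm (by omega) (by omega) (by omega) w⟩
    | exact ⟨1, by simp⟩

section Swap

variable {δ}

theorem weightedInv_map_swap_add {w : List ℕ} (hw : w.Nodup) (hlen : w.length = δ.length)
    {a b x y : ℕ} (hab : a + 1 = b) (hx : x < δ.length) (hy : y < δ.length)
    (hwx : w.getD x 0 = a) (hwy : w.getD y 0 = b) :
    weightedInv δ (w.map (Equiv.swap a b)) + pairWeight δ y x =
      weightedInv δ w + pairWeight δ x y := by
  subst hab
  have hxy : x ≠ y := by rintro rfl; omega
  have hterm : ∀ z ∈ idxPairs δ.length,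
      pairWeight δ z.1 z.2 * gtInd (w.map (Equiv.swap a (a + 1))) z.1 z.2 +
          (if z = (y, x) then pairWeight δ y x else 0) =
        pairWeight δ z.1 z.2 * gtInd w z.1 z.2 + (if z = (x, y) then pairWeight δ x y else 0) := by
    rintro ⟨u, v⟩ hz
    obtain ⟨hu, hv⟩ : u < w.length ∧ v < w.length := hlen ▸ mem_idxPairs.mp hz
    rw [← hlen] at hx hy
    by_cases hxy' : (u, v) = (x, y)
    · obtain ⟨rfl, rfl⟩ := Prod.mk.inj hxy'
      simp only [gtInd, getD_map_of_lt _ hu 0, getD_map_of_lt _ hv 0, hwx, hwy,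
        Equiv.swap_apply_left, Equiv.swap_apply_right, Prod.mk.injEq]
      split_ifs <;> omega
    by_cases hyx' : (u, v) = (y, x)
    · obtain ⟨rfl, rfl⟩ := Prod.mk.inj hyx'
      simp only [gtInd, getD_map_of_lt _ hu 0, getD_map_of_lt _ hv 0, hwx, hwy,
        Equiv.swap_apply_left, Equiv.swap_apply_right, Prod.mk.injEq]
      split_ifs <;> omega
    rw [if_neg hxy', if_neg hyx', gtInd_map_swap hu hv]
    · rintro ⟨h1, h2⟩
      exact hxy' (Prod.ext (eq_of_getD_eq hw hu hx (h1.trans hwx.symm))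
        (eq_of_getD_eq hw hv hy (h2.trans hwy.symm)))
    · rintro ⟨h1, h2⟩
      exact hyx' (Prod.ext (eq_of_getD_eq hw hu hy (h1.trans hwy.symm))
        (eq_of_getD_eq hw hv hx (h2.trans hwx.symm)))
  have hsum := Finset.sum_congr rfl hterm
  rwa [Finset.sum_add_distrib, Finset.sum_add_distrib, Finset.sum_ite_eq', Finset.sum_ite_eq',
    if_pos (mem_idxPairs.mpr ⟨hy, hx⟩), if_pos (mem_idxPairs.mpr ⟨hx, hy⟩)] at hsum

theorem weightedInv_cycVals_down_add {w : List ℕ} (hw : w.Nodup) (hlen : w.length = δ.length)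
    {a b c p q r : ℕ} (hab : a + 1 = b) (hbc : b + 1 = c)
    (hp : p < δ.length) (hq : q < δ.length) (hr : r < δ.length)
    (hvp : w.getD p 0 = a) (hvq : w.getD q 0 = b) (hvr : w.getD r 0 = c) :
    weightedInv δ (cycVals b a c w) + pairWeight δ q p + pairWeight δ r p =
      weightedInv δ w + pairWeight δ p q + pairWeight δ p r := by
  rw [cycVals_eq_map_map_swap (by omega) (by omega) (by omega), Equiv.swap_comm b a]
  have hswap₁ := weightedInv_map_swap_add hw hlen hab hp hq hvp hvq
  have hswap₂ := weightedInv_map_swap_add (hw.map (Equiv.injective _)) (by simpa using hlen)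
    hbc hp hr (by rw [getD_map_of_lt _ (hlen ▸ hp) 0, hvp, Equiv.swap_apply_left])
    (by rw [getD_map_of_lt _ (hlen ▸ hr) 0, hvr,
      Equiv.swap_apply_of_ne_of_ne (show c ≠ a by omega) (show c ≠ b by omega)])
  omega

theorem weightedInv_cycVals_up_add {w : List ℕ} (hw : w.Nodup) (hlen : w.length = δ.length)
    {a b c p q r : ℕ} (hab : a + 1 = b) (hbc : b + 1 = c)
    (hp : p < δ.length) (hq : q < δ.length) (hr : r < δ.length)
    (hvp : w.getD p 0 = a) (hvq : w.getD q 0 = b) (hvr : w.getD r 0 = c) :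
    weightedInv δ (cycVals b c a w) + pairWeight δ r q + pairWeight δ r p =
      weightedInv δ w + pairWeight δ q r + pairWeight δ p r := by
  rw [cycVals_eq_map_map_swap (by omega) (by omega) (by omega), Equiv.swap_comm b a]
  have hswap₁ := weightedInv_map_swap_add hw hlen hbc hq hr hvq hvr
  have hswap₂ := weightedInv_map_swap_add (hw.map (Equiv.injective _)) (by simpa using hlen)
    hab hp hr
    (by rw [getD_map_of_lt _ (hlen ▸ hp) 0, hvp,
      Equiv.swap_apply_of_ne_of_ne (show a ≠ b by omega) (show a ≠ c by omega)])
    (by rw [getD_map_of_lt _ (hlen ▸ hr) 0, hvr, Equiv.swap_apply_right])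
  omega

end Swap

section Pistol

variable {δ} (hδ : IsDiagramList δ)
include hδ

lemma inPistol_cell_of_le_of_le {c : ℤ × ℤ} {u s v : ℕ} (hus : u ≤ s) (hsv : s ≤ v)
    (hv : v < δ.length) (hu' : InPistol c (cell δ u)) (hv' : InPistol c (cell δ v)) :
    InPistol c (cell δ s) := by
  rcases hus.eq_or_lt with rfl | hus
  · exact hu'
  rcases hsv.eq_or_lt with rfl | hsv
  · exact hv'
  have h₁ := readingOrder_cell hδ hus (hsv.trans hv)
  have h₂ := readingOrder_cell hδ hsv hv
  rw [inPistol_iff] at hu' hv' ⊢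
  unfold ReadingOrder at h₁ h₂
  omega

lemma pistoled_of_inPistol {u v : ℕ} {S : List ℕ} (huv : u ≤ v) (hv : v < δ.length)
    (h : InPistol (cell δ u) (cell δ v)) (hS : ∀ s ∈ S, u ≤ s ∧ s ≤ v) : Pistoled δ S := by
  refine ⟨cell δ u, cell_mem δ (by omega), fun s hs => ⟨by have := hS s hs; omega, ?_⟩⟩
  obtain ⟨hus, hsv⟩ := hS s hs
  exact inPistol_cell_of_le_of_le hδ hus hsv hv (by rw [inPistol_iff]; omega) h

lemma inPistol_of_pairWeight_ne_zero {u v : ℕ} (huv : u < v) (hv : v < δ.length)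
    (h : pairWeight δ u v ≠ 0 ∨ pairWeight δ v u ≠ 0) : InPistol (cell δ u) (cell δ v) := by
  have hro := readingOrder_cell hδ huv hv
  unfold ReadingOrder at hro
  rw [inPistol_iff]
  contrapose! h
  constructor <;>
  · unfold pairWeight
    split_ifs <;> simp only [SameRowLeft, UpRight, cellBelow, Prod.ext_iff] at * <;> omega

lemma pairWeight_eq_zero_of_not_pistoled {u v : ℕ} {S : List ℕ} (hu : u < δ.length)
    (hv : v < δ.length) (huv : u ≠ v) (hS : ∀ s ∈ S, min u v ≤ s ∧ s ≤ max u v)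
    (hnp : ¬Pistoled δ S) : pairWeight δ u v = 0 ∧ pairWeight δ v u = 0 := by
  by_contra h
  rcases huv.lt_or_gt with huv | hvu
  · exact hnp (pistoled_of_inPistol hδ huv.le hv (inPistol_of_pairWeight_ne_zero hδ huv hv
      (by omega)) fun s hs => by have := hS s hs; omega)
  · exact hnp (pistoled_of_inPistol hδ hvu.le hu (inPistol_of_pairWeight_ne_zero hδ hvu hu
      (by omega)) fun s hs => by have := hS s hs; omega)

lemma pairWeight_of_inPistol {a b t : ℕ} {c : ℤ × ℤ} (hab : a < b) (hb : b < δ.length)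
    (ht : t < δ.length) (htab : t < a ∨ b < t) (ha' : InPistol c (cell δ a))
    (hb' : InPistol c (cell δ b)) (ht' : InPistol c (cell δ t)) :
    pairWeight δ a b = 1 ∧ pairWeight δ b a = 0 := by
  have hro := readingOrder_cell hδ hab hb
  have hrot : ReadingOrder (cell δ t) (cell δ a) ∨ ReadingOrder (cell δ b) (cell δ t) :=
    htab.imp (fun h => readingOrder_cell hδ h (hab.trans hb)) fun h => readingOrder_cell hδ h ht
  rw [inPistol_iff] at ha' hb' ht'
  unfold ReadingOrder at hro hrot
  constructor <;>
  · unfold pairWeight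
    split_ifs <;> simp only [SameRowLeft, UpRight, cellBelow, Prod.ext_iff] at * <;> omega

end Pistol

section Involution

variable {δ} (hδ : IsDiagramList δ) {w : List ℕ} (hw : w.Nodup) (hlen : w.length = δ.length)
  {i : ℕ} (hi : 1 ≤ i) (h₀ : i - 1 ∈ w) (h₁ : i ∈ w) (h₂ : i + 1 ∈ w)
include hδ hw hlen hi h₀ h₁ h₂

theorem weightedInv_delem (hnp : ¬Pistoled δ [w.idxOf (i - 1), w.idxOf i, w.idxOf (i + 1)]) :
    weightedInv δ (delem i w) = weightedInv δ w := by
  unfold delem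
  dsimp only
  set p := w.idxOf (i - 1)
  set q := w.idxOf i
  set r := w.idxOf (i + 1)
  have hp : p < δ.length := hlen ▸ List.idxOf_lt_length_iff.mpr h₀
  have hq : q < δ.length := hlen ▸ List.idxOf_lt_length_iff.mpr h₁
  have hr : r < δ.length := hlen ▸ List.idxOf_lt_length_iff.mpr h₂
  have hvp : w.getD p 0 = i - 1 := getD_idxOf h₀
  have hvq : w.getD q 0 = i := getD_idxOf h₁
  have hvr : w.getD r 0 = i + 1 := getD_idxOf h₂
  have hpq : p ≠ q := fun h => by rw [h, hvq] at hvp; omega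
  have hqr : q ≠ r := fun h => by rw [h, hvr] at hvq; omega
  have hpr : p ≠ r := fun h => by rw [h, hvr] at hvp; omega
  have hS : ∀ {P : ℕ → Prop}, (∀ s ∈ [p, q, r], P s) ↔ P p ∧ P q ∧ P r := by
    simp only [List.forall_mem_cons, List.not_mem_nil, IsEmpty.forall_iff, implies_true, and_true]
  split_ifs with hqmid hpmid
  · rfl
  · have := pairWeight_eq_zero_of_not_pistoled hδ hq hr hqr (by simp only [hS]; omega) hnp
    have := weightedInv_map_swap_add hw hlen rfl hq hr hvq hvr
    rw [swapVals_eq_map]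
    omega
  · have := pairWeight_eq_zero_of_not_pistoled hδ hp hq hpq (by simp only [hS]; omega) hnp
    have := weightedInv_map_swap_add hw hlen (by omega) hp hq hvp hvq
    rw [swapVals_eq_map, Equiv.swap_comm]
    omega

theorem weightedInv_dtil (hP : Pistoled δ [w.idxOf (i - 1), w.idxOf i, w.idxOf (i + 1)]) :
    weightedInv δ (dtil i w) = weightedInv δ w := by
  obtain ⟨c, -, hc⟩ := hP
  unfold dtil
  dsimp only
  set p := w.idxOf (i - 1)
  set q := w.idxOf i
  set r := w.idxOf (i + 1)
  have hp : p < δ.length := hlen ▸ List.idxOf_lt_length_iff.mpr h₀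
  have hq : q < δ.length := hlen ▸ List.idxOf_lt_length_iff.mpr h₁
  have hr : r < δ.length := hlen ▸ List.idxOf_lt_length_iff.mpr h₂
  have hvp : w.getD p 0 = i - 1 := getD_idxOf h₀
  have hvq : w.getD q 0 = i := getD_idxOf h₁
  have hvr : w.getD r 0 = i + 1 := getD_idxOf h₂
  have hpq : p ≠ q := fun h => by rw [h, hvq] at hvp; omega
  have hqr : q ≠ r := fun h => by rw [h, hvr] at hvq; omega
  have hpr : p ≠ r := fun h => by rw [h, hvr] at hvp; omega
  have hX := weightedInv_cycVals_down_add hw hlen (by omega) rfl hp hq hr hvp hvq hvr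
  have hY := weightedInv_cycVals_up_add hw hlen (by omega) rfl hp hq hr hvp hvq hvr
  have hN : ∀ {a b t}, a ∈ [p, q, r] → b ∈ [p, q, r] → t ∈ [p, q, r] → a < b →
      t < a ∨ b < t → pairWeight δ a b = 1 ∧ pairWeight δ b a = 0 :=
    fun ha hb ht hab htab => pairWeight_of_inPistol hδ hab (hc _ hb).1 (hc _ ht).1 htab
      (hc _ ha).2 (hc _ hb).2 (hc _ ht).2
  have hmem : p ∈ [p, q, r] ∧ q ∈ [p, q, r] ∧ r ∈ [p, q, r] := by simp
  split_ifs with hqmid hqfst hpr₁ hpr₂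
  · rfl
  · have := hN hmem.2.1 hmem.1 hmem.2.2 (by omega) (by omega)
    have := hN hmem.1 hmem.2.2 hmem.2.1 (by omega) (by omega)
    omega
  · have := hN hmem.2.1 hmem.2.2 hmem.1 (by omega) (by omega)
    have := hN hmem.2.2 hmem.1 hmem.2.1 (by omega) (by omega)
    omega
  · rw [cycVals_rotate (by omega) (by omega) (by omega)]
    have := hN hmem.2.2 hmem.2.1 hmem.1 (by omega) (by omega)
    have := hN hmem.1 hmem.2.2 hmem.2.1 (by omega) (by omega)
    omega
  · rw [cycVals_rotate (by omega) (by omega) (by omega)]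
    have := hN hmem.1 hmem.2.1 hmem.2.2 (by omega) (by omega)
    have := hN hmem.2.2 hmem.1 hmem.2.1 (by omega) (by omega)
    omega

theorem weightedInv_Ddelta : weightedInv δ (Ddelta δ i w) = weightedInv δ w := by
  unfold Ddelta
  split_ifs with hP
  · exact weightedInv_dtil hδ hw hlen hi h₀ h₁ h₂ hP
  · exact weightedInv_delem hδ hw hlen hi h₀ h₁ h₂ hP

end Involution

end Diagram

theorem Ddelta_preserves_inv (δ : List (ℤ × ℤ)) (hδ : IsDiagramList δ) (i : ℕ)
    (π π' : List ℕ) (hπ : π.Perm (List.range' 1 δ.length))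
    (h1 : 1 < i) (h2 : i < δ.length) (hπ' : π' = Ddelta δ i π) :
    invD δ π = invD δ π' := by
  have hlen : π.length = δ.length := by simpa using hπ.length_eq
  have hnd : π.Nodup := hπ.nodup_iff.mpr List.nodup_range'
  have hmem : ∀ v, 1 ≤ v → v ≤ δ.length → v ∈ π := fun v h h' =>
    hπ.mem_iff.mpr (List.mem_range'_1.mpr ⟨h, by omega⟩)
  obtain ⟨σ, hσ⟩ := Diagram.exists_perm_Ddelta δ i h1.le π
  subst hπ'
  refine Diagram.invD_eq_of_weightedInv_eq hδ hnd (by rw [hσ]; exact hnd.map σ.injective) hlen.ge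
    (by rw [hσ, List.length_map, hlen]) ?_
  rw [Diagram.weightedInv_Ddelta hδ hnd hlen h1.le (hmem _ (by omega) (by omega))
    (hmem _ (by omega) h2.le) (hmem _ (by omega) h2)]
end

section
/- If π ∈ S_n is contained in an i/(i+1)-double edge of the Assaf graph H_δ (i.e., D_i^δ(π) = D_{i+1}^δ(π) ≠ π), then this common image is obtained from π by swapping the positions of the values i and i+1, and the indices of i and i+1 in π are not δ-pistoled. -/
open scoped Classical

/-! The letter `i - 1` is untouched by `D_{i+1}`, so the common image of a double edge keeps it
in place. This excludes `d̃_i`, which fixes `i - 1` only when it is the identity, and the branch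
of `d_i` exchanging `i` with `i - 1`. What remains is `d_i` exchanging `i` and `i + 1` while
`i - 1` sits positionally between them; as a pistol is an interval of the reading order, a pistol
containing the cells of `i` and `i + 1` would then contain that of `i - 1`, and `d̃_i` would have
been applied instead. -/

lemma getD_idxOf_map {w : List ℕ} {v : ℕ} (hv : v ∈ w) (f : ℕ → ℕ) :
    (w.map f).getD (w.idxOf v) 0 = f v := by
  have h : w.idxOf v < w.length := List.idxOf_lt_length_iff.2 hv
  rw [List.getD_eq_getElem _ _ (by simpa using h), List.getElem_map, List.getElem_idxOf]

lemma getD_idxOf_self {w : List ℕ} {v : ℕ} (hv : v ∈ w) : w.getD (w.idxOf v) 0 = v := by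
  simpa using getD_idxOf_map hv id

lemma Ddelta_getD_idxOf_of_ne (δ : List (ℤ × ℤ)) (j : ℕ) {w : List ℕ} {v : ℕ} (hv : v ∈ w)
    (h₁ : v ≠ j - 1) (h₂ : v ≠ j) (h₃ : v ≠ j + 1) :
    (Ddelta δ j w).getD (w.idxOf v) 0 = v := by
  simp only [Ddelta, delem, dtil]
  split_ifs <;> first
    | exact getD_idxOf_self hv
    | simp only [swapVals, cycVals, getD_idxOf_map hv, h₁, h₂, h₃, if_false]

lemma dtil_eq_self_of_getD_idxOf_pred {i : ℕ} {w : List ℕ} (hi : 1 < i) (hm : i - 1 ∈ w)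
    (hfix : (dtil i w).getD (w.idxOf (i - 1)) 0 = i - 1) : dtil i w = w := by
  simp only [dtil] at hfix ⊢
  split_ifs at hfix ⊢
  · rfl
  all_goals
    simp only [cycVals, getD_idxOf_map hm] at hfix
    split_ifs at hfix <;> omega

lemma delem_eq_swapVals_of_getD_idxOf_pred {i : ℕ} {w : List ℕ} (hi : 1 < i) (hm : i - 1 ∈ w)
    (hfix : (delem i w).getD (w.idxOf (i - 1)) 0 = i - 1) (hne : delem i w ≠ w) :
    (w.idxOf i < w.idxOf (i - 1) ∧ w.idxOf (i - 1) < w.idxOf (i + 1) ∨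
      w.idxOf (i + 1) < w.idxOf (i - 1) ∧ w.idxOf (i - 1) < w.idxOf i) ∧
    delem i w = swapVals i (i + 1) w := by
  simp only [delem] at hfix hne ⊢
  split_ifs at hfix hne ⊢ with _ hbetween
  · exact absurd rfl hne
  · exact ⟨hbetween, rfl⟩
  · simp only [swapVals, getD_idxOf_map hm] at hfix
    split_ifs at hfix <;> omega

lemma IsDiagramList.readingOrder_getD_s12 {δ : List (ℤ × ℤ)} (hδ : IsDiagramList δ) {j k : ℕ}
    (hjk : j < k) (hk : k < δ.length) :
    ReadingOrder (δ.getD j (0, 0)) (δ.getD k (0, 0)) := by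
  rw [List.getD_eq_getElem _ _ (hjk.trans hk), List.getD_eq_getElem _ _ hk]
  exact List.pairwise_iff_getElem.1 hδ j k (hjk.trans hk) hk hjk

lemma InPistol.of_between {c e₁ e e₂ : ℤ × ℤ} (h₁ : InPistol c e₁) (h₂ : InPistol c e₂)
    (h₁e : ReadingOrder e₁ e) (he₂ : ReadingOrder e e₂) : InPistol c e := by
  simp only [InPistol, leRO, ReadingOrder, Prod.ext_iff] at *
  omega

lemma Pistoled.cons_of_between {δ : List (ℤ × ℤ)} (hδ : IsDiagramList δ) {p q r : ℕ}
    (h : Pistoled δ [q, r]) (hp : p < δ.length)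
    (hbetween : q < p ∧ p < r ∨ r < p ∧ p < q) : Pistoled δ [p, q, r] := by
  obtain ⟨c, hc, hqr⟩ := h
  obtain ⟨hq, hcq⟩ := hqr q (by simp)
  obtain ⟨hr, hcr⟩ := hqr r (by simp)
  have hcp : InPistol c (δ.getD p (0, 0)) := by
    rcases hbetween with ⟨hqp, hpr⟩ | ⟨hrp, hpq⟩
    · exact hcq.of_between hcr (hδ.readingOrder_getD_s12 hqp hp) (hδ.readingOrder_getD_s12 hpr hr)
    · exact hcr.of_between hcq (hδ.readingOrder_getD_s12 hrp hp) (hδ.readingOrder_getD_s12 hpq hq)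
  refine ⟨c, hc, fun k hk => ?_⟩
  simp only [List.mem_cons, List.not_mem_nil, or_false] at hk
  rcases hk with rfl | rfl | rfl
  exacts [⟨hp, hcp⟩, ⟨hq, hcq⟩, ⟨hr, hcr⟩]

theorem double_edge_swap (δ : List (ℤ × ℤ)) (hδ : IsDiagramList δ) (i : ℕ)
    (π : List ℕ) (hπ : π.Perm (List.range' 1 δ.length))
    (h1 : 1 < i) (h2 : i + 1 < δ.length)
    (hdbl : Ddelta δ i π = Ddelta δ (i + 1) π) (hne : Ddelta δ i π ≠ π) :
    Ddelta δ i π = swapVals i (i + 1) π ∧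
    ¬ Pistoled δ [π.idxOf i, π.idxOf (i + 1)] := by
  have hm : i - 1 ∈ π := hπ.mem_iff.2 (List.mem_range'_1.2 (by omega))
  have hp : π.idxOf (i - 1) < δ.length := by
    simpa [hπ.length_eq] using List.idxOf_lt_length_iff.2 hm
  have hfix : (Ddelta δ i π).getD (π.idxOf (i - 1)) 0 = i - 1 :=
    hdbl ▸ Ddelta_getD_idxOf_of_ne δ (i + 1) hm (by omega) (by omega) (by omega)
  by_cases hP : Pistoled δ [π.idxOf (i - 1), π.idxOf i, π.idxOf (i + 1)]
  · rw [Ddelta, if_pos hP] at hfix hne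
    exact absurd (dtil_eq_self_of_getD_idxOf_pred h1 hm hfix) hne
  · rw [Ddelta, if_neg hP] at hfix hne ⊢
    obtain ⟨hbetween, hswap⟩ := delem_eq_swapVals_of_getD_idxOf_pred h1 hm hfix hne
    exact ⟨hswap, fun hqr => hP (hqr.cons_of_between hδ hp hbetween)⟩
end

section
/- Let T be a standard filling of a diagram δ whose row reading word π contains one of the strict patterns 1342 or 2431 occurring at δ-pistoled indices, or one of 12543 or 34521 at indices i_1 < ... < i_5 with both {i_1,...,i_4} and {i_2,...,i_5} δ-pistoled but {i_1,...,i_5} not δ-pistoled. Then inv_δ(π) ≥ 1. -/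
open scoped Classical

/-!
Each of the four patterns puts, inside one pistol, three letters at positions `s < u < v` with
`π u = π v + 1`: the letters `1, 3, 2` of `1342`, `2, 4, 3` of `2431`, `2, 5, 4` of `12543` and
`4, 2, 1` of `34521` (for the last two, the pistol of `{i₂, …, i₅}`). If `u` and `v` share a row,
the cell below `u`, or its absence, completes an inversion, since no value lies strictly between
`π v` and `π u`. Otherwise `v` lies in the row below, and strictly left of `u` because the earlier
letter `s` forces `u` strictly right of the pistol's corner; then the cell above `v`, or its
absence, completes an inversion.
-/

theorem InPistol.cases {c e : ℤ × ℤ} (h : InPistol c e) :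
    (e.2 = c.2 ∧ c.1 ≤ e.1) ∨ (e.2 = c.2 - 1 ∧ e.1 ≤ c.1) := by
  obtain ⟨h₁, h₂⟩ := h
  simp only [leRO, ReadingOrder, Prod.ext_iff] at h₁ h₂
  omega

theorem Pistoled.mono {δ : List (ℤ × ℤ)} {S T : List ℕ} (hST : S ⊆ T) (h : Pistoled δ T) :
    Pistoled δ S :=
  let ⟨c, hc, hT⟩ := h
  ⟨c, hc, fun i hi => hT i (hST hi)⟩

theorem IsDiagramList.readingOrder_getD_s13 {δ : List (ℤ × ℤ)} (hδ : IsDiagramList δ) {a b : ℕ}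
    (hab : a < b) (hb : b < δ.length) : ReadingOrder (δ.getD a (0, 0)) (δ.getD b (0, 0)) := by
  rw [List.getD_eq_getElem _ _ (hab.trans hb), List.getD_eq_getElem _ _ hb]
  exact List.pairwise_iff_getElem.mp hδ a b _ hb hab

theorem List.exists_getD_eq_of_mem {α : Type*} {l : List α} {x : α} (d : α) (h : x ∈ l) :
    ∃ i < l.length, l.getD i d = x := by
  obtain ⟨i, hi, rfl⟩ := List.mem_iff_getElem.mp h
  exact ⟨i, hi, List.getD_eq_getElem _ _ hi⟩

theorem List.Nodup.getD_ne_getD {α : Type*} {l : List α} (hl : l.Nodup) {a b : ℕ}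
    (ha : a < l.length) (hb : b < l.length) (hab : a ≠ b) (d : α) : l.getD a d ≠ l.getD b d := by
  rw [List.getD_eq_getElem _ _ ha, List.getD_eq_getElem _ _ hb]
  exact fun h => hab (hl.getElem_inj_iff.mp h)

theorem StrictPatternAt.getD_lt_getD {p π idx : List ℕ} (hp : StrictPatternAt p π idx) {i j : ℕ}
    (hij : i < j) (hj : j < p.length) : idx.getD i 0 < idx.getD j 0 := by
  have hj' : j < idx.length := hp.2.2.1 ▸ hj
  rw [List.getD_eq_getElem _ _ (hij.trans hj'), List.getD_eq_getElem _ _ hj']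
  exact List.pairwise_iff_getElem.mp hp.1 i j _ hj' hij

theorem StrictPatternAt.getD_mem {p π idx : List ℕ} (hp : StrictPatternAt p π idx) {j : ℕ}
    (hj : j < p.length) : idx.getD j 0 ∈ idx := by
  rw [List.getD_eq_getElem _ _ (hp.2.2.1 ▸ hj)]
  exact List.getElem_mem _

theorem card_filter_pairs_pos {n : ℕ} {P : ℕ × ℕ → Prop} [DecidablePred P] {j k : ℕ}
    (hj : j < n) (hk : k < n) (h : P (j, k)) :
    0 < ((Finset.range n ×ˢ Finset.range n).filter P).card :=
  Finset.card_pos.mpr ⟨(j, k), by simp [hj, hk, h]⟩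

section Inversions

variable {δ : List (ℤ × ℤ)} {π : List ℕ}

theorem one_le_invD_of_invTripleAt {j k : ℕ} (h : InvTripleAt δ π j k) : 1 ≤ invD δ π := by
  have := card_filter_pairs_pos (P := fun p => InvTripleAt δ π p.1 p.2) (h.1.trans h.2.1) h.2.1 h
  unfold invD
  omega

theorem one_le_invD_of_invPairBelowAt {j k : ℕ} (h : InvPairBelowAt δ π j k) : 1 ≤ invD δ π := by
  have := card_filter_pairs_pos (P := fun p => InvPairBelowAt δ π p.1 p.2)
    (h.1.trans h.2.1) h.2.1 h
  unfold invD
  omega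

theorem one_le_invD_of_invPairAboveAt {k m : ℕ} (h : InvPairAboveAt δ π k m) : 1 ≤ invD δ π := by
  have := card_filter_pairs_pos (P := fun p => InvPairAboveAt δ π p.1 p.2) h.1 h.2.1 h
  unfold invD
  omega

theorem one_le_invD_of_sameRow (hπ : π.Nodup) (hlen : δ.length ≤ π.length) {u v : ℕ}
    (huv : u < v) (hv : v < δ.length) (hrow : (δ.getD u (0, 0)).2 = (δ.getD v (0, 0)).2)
    (hval : π.getD u 0 = π.getD v 0 + 1) : 1 ≤ invD δ π := by
  by_cases hbelow : ((δ.getD u (0, 0)).1, (δ.getD u (0, 0)).2 - 1) ∈ δ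
  · obtain ⟨m, hm, hmD⟩ := List.exists_getD_eq_of_mem (0, 0) hbelow
    have hrow_m : (δ.getD m (0, 0)).2 = (δ.getD u (0, 0)).2 - 1 := by rw [hmD]
    have hmu := hπ.getD_ne_getD (a := m) (b := u) (by omega) (by omega)
      (by rintro rfl; omega) 0
    have hmv := hπ.getD_ne_getD (a := m) (b := v) (by omega) (by omega)
      (by rintro rfl; omega) 0
    exact one_le_invD_of_invTripleAt ⟨huv, hv, hrow, m, hm, hmD, by omega⟩
  · exact one_le_invD_of_invPairBelowAt ⟨huv, hv, hrow, hbelow, by omega⟩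

theorem one_le_invD_of_rowBelow (hδ : IsDiagramList δ) (hπ : π.Nodup)
    (hlen : δ.length ≤ π.length) {u v : ℕ} (hu : u < δ.length) (hv : v < δ.length)
    (hrow : (δ.getD u (0, 0)).2 = (δ.getD v (0, 0)).2 + 1)
    (hcol : (δ.getD v (0, 0)).1 < (δ.getD u (0, 0)).1)
    (hval : π.getD u 0 = π.getD v 0 + 1) : 1 ≤ invD δ π := by
  by_cases habove : ((δ.getD v (0, 0)).1, (δ.getD v (0, 0)).2 + 1) ∈ δ
  · obtain ⟨z, hz, hzD⟩ := List.exists_getD_eq_of_mem (0, 0) habove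
    have hcol_z : (δ.getD z (0, 0)).1 = (δ.getD v (0, 0)).1 := by rw [hzD]
    have hrow_z : (δ.getD z (0, 0)).2 = (δ.getD v (0, 0)).2 + 1 := by rw [hzD]
    have hzu : z < u := by
      refine lt_of_le_of_ne (not_lt.mp fun huz => ?_) (by rintro rfl; omega)
      have := hδ.readingOrder_getD_s13 huz hz
      unfold ReadingOrder at this
      omega
    have hzv : z ≠ v := by rintro rfl; omega
    have hπzu := hπ.getD_ne_getD (by omega) (by omega) hzu.ne 0
    have hπzv := hπ.getD_ne_getD (a := z) (b := v) (by omega) (by omega) hzv 0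
    refine one_le_invD_of_invTripleAt ⟨hzu, hu, by omega, v, hv, ?_, by omega⟩
    rw [hzD, add_sub_cancel_right]
  · exact one_le_invD_of_invPairAboveAt ⟨hu, hv, hrow, hcol, habove, by omega⟩

theorem one_le_invD_of_pistoled (hδ : IsDiagramList δ) (hπ : π.Nodup)
    (hlen : δ.length ≤ π.length) {s u v : ℕ} (hsu : s < u) (huv : u < v)
    (hpist : Pistoled δ [s, u, v]) (hval : π.getD u 0 = π.getD v 0 + 1) : 1 ≤ invD δ π := by
  obtain ⟨c, -, hcells⟩ := hpist
  obtain ⟨-, hs⟩ := hcells s (by simp)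
  obtain ⟨hu, hu'⟩ := hcells u (by simp)
  obtain ⟨hv, hv'⟩ := hcells v (by simp)
  have hsu' := hδ.readingOrder_getD_s13 hsu hu
  have huv' := hδ.readingOrder_getD_s13 huv hv
  unfold ReadingOrder at hsu' huv'
  have hs_geo := hs.cases
  have hu_geo := hu'.cases
  have hv_geo := hv'.cases
  by_cases hrow : (δ.getD u (0, 0)).2 = (δ.getD v (0, 0)).2
  · exact one_le_invD_of_sameRow hπ hlen huv hv hrow hval
  · exact one_le_invD_of_rowBelow hδ hπ hlen hu hv (by omega) (by omega) hval

theorem one_le_invD_of_strictPatternAt (hδ : IsDiagramList δ) (hπ : π.Nodup)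
    (hlen : δ.length ≤ π.length) {p idx S : List ℕ} (hp : StrictPatternAt p π idx)
    {a b c : ℕ} (hab : a < b) (hbc : b < c) (hc : c < p.length)
    (hpc : p.getD b 0 = p.getD c 0 + 1) (hpist : Pistoled δ S)
    (hS : ∀ j ∈ [a, b, c], idx.getD j 0 ∈ S) : 1 ≤ invD δ π := by
  obtain ⟨k, hk⟩ := hp.2.2.2
  refine one_le_invD_of_pistoled hδ hπ hlen (hp.getD_lt_getD hab (hbc.trans hc))
    (hp.getD_lt_getD hbc hc) (hpist.mono ?_) ?_
  · simpa [List.subset_def] using hS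
  · rw [hk b (hbc.trans hc), hk c hc, hpc]
    ring

end Inversions

theorem pattern_forces_inversion (δ : List (ℤ × ℤ)) (hδ : IsDiagramList δ)
    (π : List ℕ) (hπ : π.Perm (List.range' 1 δ.length))
    (hpat :
      (∃ idx : List ℕ,
        (StrictPatternAt [1, 3, 4, 2] π idx ∨ StrictPatternAt [2, 4, 3, 1] π idx) ∧
        Pistoled δ idx) ∨
      (∃ i₁ i₂ i₃ i₄ i₅ : ℕ, i₁ < i₂ ∧ i₂ < i₃ ∧ i₃ < i₄ ∧ i₄ < i₅ ∧
        (StrictPatternAt [1, 2, 5, 4, 3] π [i₁, i₂, i₃, i₄, i₅] ∨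
         StrictPatternAt [3, 4, 5, 2, 1] π [i₁, i₂, i₃, i₄, i₅]) ∧
        Pistoled δ [i₁, i₂, i₃, i₄] ∧ Pistoled δ [i₂, i₃, i₄, i₅] ∧
        ¬ Pistoled δ [i₁, i₂, i₃, i₄, i₅])) :
    1 ≤ invD δ π := by
  have hnodup : π.Nodup := hπ.nodup_iff.mpr List.nodup_range'
  have hlen : δ.length ≤ π.length := by simp [hπ.length_eq]
  rcases hpat with ⟨idx, hp | hp, hpist⟩ | ⟨i₁, i₂, i₃, i₄, i₅, -, -, -, -, hp | hp, -, hpist, -⟩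
  · exact one_le_invD_of_strictPatternAt hδ hnodup hlen hp (a := 0) (b := 1) (c := 3)
      (by simp) (by simp) (by simp) rfl hpist fun j hj => hp.getD_mem (by simp at hj ⊢; omega)
  · exact one_le_invD_of_strictPatternAt hδ hnodup hlen hp (a := 0) (b := 1) (c := 2)
      (by simp) (by simp) (by simp) rfl hpist fun j hj => hp.getD_mem (by simp at hj ⊢; omega)
  · exact one_le_invD_of_strictPatternAt hδ hnodup hlen hp (a := 1) (b := 2) (c := 3)
      (by simp) (by simp) (by simp) rfl hpist (by simp)
  · exact one_le_invD_of_strictPatternAt hδ hnodup hlen hp (a := 1) (b := 3) (c := 4)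
      (by simp) (by simp) (by simp) rfl hpist (by simp)
end

section
/- Let μ be a partition of n that does not contain (3,3,3) as a subdiagram. Then for every partition λ of n, every Yamanouchi word w of content λ with inv_μ(w) = 0 does not jam μ; that is, { w ∈ Yam_μ(λ) : inv_μ(w) = 0 } = { w ∈ Yam(λ) : inv_μ(w) = 0 }. -/
open scoped Classical

/-!
Let `Q, R` be the `(j+1)`-th and `j`-th last `i+1` of `w`, and `P', P` the `(j+1)`-th and `j`-th
last `i`. Yamanouchi interlacing gives `Q < R < P` and `Q < P' < P` with `R ≠ P'`, so a pistol
containing `Q` and `P` spans at least four positions of the reading word; a pistol rooted in row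
`r` spans `μ_r + 1` positions, so it is rooted in row `0` or `1` since `μ_2 < 3`.

With `inv_μ(w) = 0` the bottom row has no inversion pair, so it is weakly increasing, and a weakly
increasing suffix of a Yamanouchi word consists of `1`s. Hence `Q` lies in row `1`, and the
inversion triple condition on `Q`, `P'` and the `1` below `Q` forces `i = 1` (if `P'` is not
itself in the bottom row). The cell `M` below `R` holds a `1` occurring after `P`, say the `t`-th
last one, `t < j`; the `(t+1)`-th last `2` lies between `R` and `M`, i.e. in the pistol of `R`, so
`w` jams `μ` at `(1, t)`: infinite descent.
-/

def occurrences (w : List ℕ) (v : ℕ) : List ℕ :=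
  (List.range w.length).filter fun p => w.getD p 0 = v

lemma occurrences_cons (a : ℕ) (w : List ℕ) (v : ℕ) :
    occurrences (a :: w) v = (if a = v then [0] else []) ++ (occurrences w v).map Nat.succ := by
  simp only [occurrences, List.length_cons, List.range_succ_eq_map, List.filter_cons,
    List.getD_cons_zero, List.filter_map, Function.comp_def, List.getD_cons_succ]
  split_ifs <;> simp_all

lemma length_occurrences (w : List ℕ) (v : ℕ) : (occurrences w v).length = w.count v := by
  induction w with
  | nil => rfl
  | cons a w ih =>
    rw [occurrences_cons, List.count_cons]
    split_ifs <;> simp_all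

lemma posFromLast_cons (a : ℕ) (w : List ℕ) (v s : ℕ) :
    posFromLast (a :: w) v s = if s - 1 < w.count v then posFromLast w v s + 1 else 0 := by
  change (occurrences (a :: w) v).reverse.getD (s - 1) 0 = _
  rw [occurrences_cons, List.reverse_append, ← List.map_reverse, ← length_occurrences]
  by_cases h : s - 1 < (occurrences w v).length
  · rw [if_pos h, List.getD_append _ _ _ _ (by simpa using h)]
    change _ = (occurrences w v).reverse.getD (s - 1) 0 + 1
    rw [List.getD_eq_getElem _ _ (by simpa using h), List.getD_eq_getElem _ _ (by simpa using h)]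
    simp
  · rw [if_neg h, List.getD_append_right _ _ _ _ (by simpa using h)]
    split_ifs <;> simp

section PosFromLast

variable {w : List ℕ} {v : ℕ}

lemma posFromLast_spec {s : ℕ} (hs : 1 ≤ s) (hsw : s ≤ w.count v) :
    posFromLast w v s < w.length ∧ w.getD (posFromLast w v s) 0 = v ∧
      (w.drop (posFromLast w v s)).count v = s := by
  induction w with
  | nil => simp at hsw; omega
  | cons a w ih =>
    rw [posFromLast_cons]
    by_cases h : s - 1 < w.count v
    · obtain ⟨h1, h2, h3⟩ := ih (by omega)
      simpa [h] using ⟨h1, h2, h3⟩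
    · have ha : a = v := by by_contra ha; simp [ha] at hsw; omega
      simp [h, ha] at hsw ⊢
      omega

lemma count_drop_lt_count_drop {p k : ℕ} (hpk : p < k) (hp : p < w.length)
    (hv : w.getD p 0 = v) : (w.drop k).count v < (w.drop p).count v := by
  rw [List.getD_eq_getElem _ _ hp] at hv
  have hsub := List.drop_sublist (k - (p + 1)) (w.drop (p + 1))
  rw [List.drop_drop, show p + 1 + (k - (p + 1)) = k by omega] at hsub
  rw [List.drop_eq_getElem_cons hp, List.count_cons, hv]
  simpa using Nat.lt_succ_of_le (hsub.count_le v)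

lemma posFromLast_eq_of_count_drop_eq {s k : ℕ} (hk : k < w.length)
    (hv : w.getD k 0 = v) (hs : (w.drop k).count v = s) : posFromLast w v s = k := by
  have hs1 : 1 ≤ s := hs ▸ Nat.one_le_of_lt (count_drop_lt_count_drop (Nat.lt_succ_self k) hk hv)
  have hsw : s ≤ w.count v := hs ▸ (List.drop_sublist k w).count_le v
  obtain ⟨hp, hpv, hps⟩ := posFromLast_spec hs1 hsw
  rcases lt_trichotomy (posFromLast w v s) k with hlt | heq | hgt
  · have := count_drop_lt_count_drop hlt hp hpv; omega
  · exact heq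
  · have := count_drop_lt_count_drop hgt hk hv; omega

lemma posFromLast_lt_posFromLast {s s' : ℕ} (hs : 1 ≤ s) (hss' : s < s')
    (hs' : s' ≤ w.count v) : posFromLast w v s' < posFromLast w v s := by
  obtain ⟨hp, hpv, hps⟩ := posFromLast_spec hs (hss'.le.trans hs')
  obtain ⟨-, -, hqs⟩ := posFromLast_spec (hs.trans hss'.le) hs'
  by_contra! hpq
  rcases hpq.eq_or_lt with heq | hlt
  · rw [heq] at hps; omega
  · have := count_drop_lt_count_drop hlt hp hpv
    omega

lemma posFromLast_le_posFromLast {s s' : ℕ} (hs : 1 ≤ s) (hss' : s ≤ s')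
    (hs' : s' ≤ w.count v) : posFromLast w v s' ≤ posFromLast w v s := by
  rcases hss'.eq_or_lt with rfl | hlt
  · rfl
  · exact (posFromLast_lt_posFromLast hs hlt hs').le

end PosFromLast

namespace IsYam

variable {lam' w : List ℕ}

lemma count_drop_succ_le (hyam : IsYam lam' w) (p : ℕ) {i : ℕ} (hi : 1 ≤ i) :
    (w.drop p).count (i + 1) ≤ (w.drop p).count i := by
  obtain ⟨i, rfl⟩ : ∃ i', i = i' + 1 := ⟨i - 1, by omega⟩
  exact hyam.2.2 _ (List.drop_suffix p w) i

lemma count_succ_le (hyam : IsYam lam' w) {i : ℕ} (hi : 1 ≤ i) : w.count (i + 1) ≤ w.count i := by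
  simpa using hyam.count_drop_succ_le 0 hi

lemma posFromLast_succ_lt (hyam : IsYam lam' w) {i s : ℕ} (hi : 1 ≤ i) (hs : 1 ≤ s)
    (hsw : s ≤ w.count (i + 1)) : posFromLast w (i + 1) s < posFromLast w i s := by
  obtain ⟨-, huv, hus⟩ := posFromLast_spec hs hsw
  obtain ⟨hv, hvv, hvs⟩ := posFromLast_spec hs (hsw.trans (hyam.count_succ_le hi))
  by_contra! h
  rcases h.eq_or_lt with heq | hlt
  · rw [heq] at hvv; omega
  · have := count_drop_lt_count_drop hlt hv hvv
    have := hyam.count_drop_succ_le (posFromLast w (i + 1) s) hi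
    omega

lemma posFromLast_add_three_le (hyam : IsYam lam' w) {i j : ℕ} (hi : 1 ≤ i) (hj : 1 ≤ j)
    (hjw : j + 1 ≤ w.count (i + 1)) : posFromLast w (i + 1) (j + 1) + 3 ≤ posFromLast w i j := by
  have hQR := posFromLast_lt_posFromLast hj (by omega : j < j + 1) hjw
  have hRP := hyam.posFromLast_succ_lt hi hj (by omega)
  have hQP' := hyam.posFromLast_succ_lt hi (by omega) hjw
  have hP'P :=
    posFromLast_lt_posFromLast hj (by omega : j < j + 1) (hjw.trans (hyam.count_succ_le hi))
  have hR := (posFromLast_spec hj (show j ≤ w.count (i + 1) by omega)).2.1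
  have hP' := (posFromLast_spec (by omega) (hjw.trans (hyam.count_succ_le hi))).2.1
  have hR_ne_P' : posFromLast w (i + 1) j ≠ posFromLast w i (j + 1) := fun h => by
    rw [h] at hR; omega
  omega

lemma eq_one_of_mem_drop (hyam : IsYam lam' w) {k x : ℕ} (hsorted : (w.drop k).Pairwise (· ≤ ·))
    (hx : x ∈ w.drop k) : x = 1 := by
  obtain ⟨l₁, l₂, hsplit⟩ := List.append_of_mem hx
  have hx1 : 1 ≤ x := hyam.1 x (List.mem_of_mem_drop hx)
  by_contra hne
  have hsuffix : (x :: l₂) <:+ w := (List.suffix_append l₁ _).trans (hsplit ▸ List.drop_suffix k w)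
  have hcount := hyam.2.2 _ hsuffix (x - 2)
  rw [show x - 2 + 2 = x by omega, List.count_cons_self] at hcount
  have hmem : x - 1 ∈ l₂ := by
    rw [show x - 2 + 1 = x - 1 by omega, List.count_cons, if_neg (by simp; omega)] at hcount
    exact List.count_pos_iff.mp (by omega)
  rw [hsplit, List.pairwise_append, List.pairwise_cons] at hsorted
  have := hsorted.2.1.1 _ hmem
  omega

end IsYam

lemma sum_drop_eq_getD_add (lam : List ℕ) (r : ℕ) :
    (lam.drop r).sum = lam.getD r 0 + (lam.drop (r + 1)).sum := by
  by_cases hr : r < lam.length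
  · rw [List.drop_eq_getElem_cons hr, List.sum_cons, List.getD_eq_getElem _ _ hr]
  · rw [List.drop_eq_nil_of_le (not_lt.mp hr), List.drop_eq_nil_of_le (by omega),
      List.getD_eq_default _ _ (not_lt.mp hr)]
    rfl

lemma sum_drop_antitone (lam : List ℕ) {a b : ℕ} (hab : a ≤ b) :
    (lam.drop b).sum ≤ (lam.drop a).sum :=
  (List.drop_sublist_drop_left lam hab).sum_le_sum fun _ _ => Nat.zero_le _

lemma IsPartition.getD_antitone {lam : List ℕ} (hlam : IsPartition lam) {r r' : ℕ}
    (hrr' : r ≤ r') : lam.getD r' 0 ≤ lam.getD r 0 := by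
  rcases hrr'.eq_or_lt with rfl | hlt
  · rfl
  by_cases hr' : r' < lam.length
  · rw [List.getD_eq_getElem _ _ hr', List.getD_eq_getElem _ _ (hlt.trans hr')]
    exact List.pairwise_iff_getElem.mp hlam.1 r r' _ hr' hlt
  · rw [List.getD_eq_default _ _ (not_lt.mp hr')]
    exact Nat.zero_le _

def cellIndex (lam : List ℕ) (r x : ℕ) : ℕ := (lam.drop (r + 1)).sum + x

lemma cellIndex_lt_sum {lam : List ℕ} {r x : ℕ} (hx : x < lam.getD r 0) :
    cellIndex lam r x < lam.sum := by
  have := sum_drop_eq_getD_add lam r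
  have := sum_drop_antitone lam (Nat.zero_le r)
  simp only [cellIndex, List.drop_zero] at *
  omega

/-- The cast `(x : ℤ)` in `partitionDiagram` elaborates as a coercion of the whole list
`List.range _ : List ℕ` to `List ℤ`; this restates the definition with a pointwise cast. -/
lemma partitionDiagram_eq (lam : List ℕ) : partitionDiagram lam =
    ((List.range lam.length).reverse.map fun r =>
      (List.range (lam.getD r 0)).map fun x : ℕ => ((x : ℤ), (r : ℤ))).flatten := by
  unfold partitionDiagram
  congr 1
  refine List.map_congr_left fun r _ => ?_
  rw [bind_pure_comp]
  simp

lemma partitionDiagram_append_singleton (lam : List ℕ) (a : ℕ) :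
    partitionDiagram (lam ++ [a]) =
      (List.range a).map (fun x : ℕ => ((x : ℤ), (lam.length : ℤ))) ++ partitionDiagram lam := by
  simp only [partitionDiagram_eq, List.length_append, List.length_singleton, List.range_succ,
    List.reverse_append, List.reverse_singleton, List.singleton_append, List.map_cons,
    List.flatten_cons, List.getD_append_right _ _ _ _ le_rfl, Nat.sub_self, List.getD_cons_zero]
  congr 1
  refine congrArg List.flatten (List.map_congr_left fun r hr => ?_)
  rw [List.getD_append _ _ _ _ (by simpa using hr)]

lemma length_partitionDiagram (lam : List ℕ) : (partitionDiagram lam).length = lam.sum := by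
  induction lam using List.reverseRecOn with
  | nil => rfl
  | append_singleton lam a ih =>
    simp [partitionDiagram_append_singleton, ih, Nat.add_comm]

lemma cellIndex_append_singleton {lam : List ℕ} (a : ℕ) {r : ℕ} (hr : r < lam.length) (x : ℕ) :
    cellIndex (lam ++ [a]) r x = a + cellIndex lam r x := by
  simp [cellIndex, List.drop_append_of_le_length hr]
  omega

lemma cellIndex_append_singleton_length (lam : List ℕ) (a x : ℕ) :
    cellIndex (lam ++ [a]) lam.length x = x := by
  simp [cellIndex]

lemma partitionDiagram_getD_cellIndex {lam : List ℕ} {r x : ℕ} (hr : r < lam.length)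
    (hx : x < lam.getD r 0) :
    (partitionDiagram lam).getD (cellIndex lam r x) (0, 0) = ((x : ℤ), (r : ℤ)) := by
  induction lam using List.reverseRecOn generalizing r with
  | nil => simp at hr
  | append_singleton lam a ih =>
    rw [partitionDiagram_append_singleton]
    rcases (Nat.lt_succ_iff_lt_or_eq.mp (by simpa using hr)) with hr | rfl
    · rw [List.getD_append _ _ _ _ hr] at hx
      rw [cellIndex_append_singleton a hr, List.getD_append_right _ _ _ _ (by simp),
        List.length_map, List.length_range, Nat.add_sub_cancel_left, ih hr hx]
    · simp only [List.getD_append_right _ _ _ _ le_rfl, Nat.sub_self, List.getD_cons_zero] at hx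
      rw [cellIndex_append_singleton_length, List.getD_append _ _ _ _ (by simpa using hx),
        List.getD_eq_getElem _ _ (by simpa using hx)]
      simp

lemma exists_cellIndex_eq {lam : List ℕ} {k : ℕ} (hk : k < lam.sum) :
    ∃ r < lam.length, ∃ x < lam.getD r 0, cellIndex lam r x = k := by
  induction lam using List.reverseRecOn generalizing k with
  | nil => simp at hk
  | append_singleton lam a ih =>
    rw [List.sum_append, List.sum_singleton] at hk
    by_cases hka : k < a
    · refine ⟨lam.length, by simp, k, ?_, cellIndex_append_singleton_length lam a k⟩
      simpa [List.getD_append_right _ _ _ _ le_rfl] using hka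
    · obtain ⟨r, hr, x, hx, hrx⟩ := ih (k := k - a) (by omega)
      refine ⟨r, by simp; omega, x, by rwa [List.getD_append _ _ _ _ hr], ?_⟩
      rw [cellIndex_append_singleton a hr]
      omega

lemma cellIndex_succ_add (lam : List ℕ) (r x : ℕ) :
    cellIndex lam (r + 1) x + lam.getD (r + 1) 0 = cellIndex lam r x := by
  have := sum_drop_eq_getD_add lam (r + 1)
  unfold cellIndex
  omega

lemma sum_eq_cellIndex_zero_add (lam : List ℕ) : lam.sum = cellIndex lam 0 0 + lam.getD 0 0 := by
  have := sum_drop_eq_getD_add lam 0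
  simp only [List.drop_zero] at this
  unfold cellIndex
  omega

lemma mem_partitionDiagram {lam : List ℕ} {c : ℤ × ℤ} :
    c ∈ partitionDiagram lam ↔ ∃ r < lam.length, ∃ x < lam.getD r 0, c = ((x : ℤ), (r : ℤ)) := by
  constructor
  · intro hc
    obtain ⟨k, hk, rfl⟩ := List.mem_iff_getElem.mp hc
    obtain ⟨r, hr, x, hx, rfl⟩ := exists_cellIndex_eq (length_partitionDiagram lam ▸ hk)
    exact ⟨r, hr, x, hx, by rw [← List.getD_eq_getElem _ (0, 0) hk,
      partitionDiagram_getD_cellIndex hr hx]⟩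
  · rintro ⟨r, hr, x, hx, rfl⟩
    have hk : cellIndex lam r x < (partitionDiagram lam).length := by
      rw [length_partitionDiagram]; exact cellIndex_lt_sum hx
    rw [← partitionDiagram_getD_cellIndex hr hx, List.getD_eq_getElem _ _ hk]
    exact List.getElem_mem hk

lemma inPistol_natCast_iff (xh rh x r : ℕ) :
    InPistol ((xh : ℤ), (rh : ℤ)) ((x : ℤ), (r : ℤ)) ↔
      (r = rh ∧ xh ≤ x) ∨ (r + 1 = rh ∧ x ≤ xh) := by
  simp only [InPistol, leRO, ReadingOrder, Prod.ext_iff]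
  omega

lemma inPistol_partitionDiagram_getD_iff {lam : List ℕ} (hlam : IsPartition lam) {rh xh k : ℕ}
    (hxh : xh < lam.getD rh 0) (hk : k < lam.sum) :
    InPistol ((xh : ℤ), (rh : ℤ)) ((partitionDiagram lam).getD k (0, 0)) ↔
      cellIndex lam rh xh ≤ k ∧ k ≤ cellIndex lam rh xh + lam.getD rh 0 := by
  obtain ⟨r, hr, x, hx, rfl⟩ := exists_cellIndex_eq hk
  rw [partitionDiagram_getD_cellIndex hr hx, inPistol_natCast_iff]
  have hrow := cellIndex_succ_add lam r
  have hrowh := cellIndex_succ_add lam rh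
  unfold cellIndex at *
  rcases lt_or_ge rh r with hlt | hle
  · have := sum_drop_antitone lam (show rh + 1 ≤ r by omega)
    have := hrow x
    have := sum_drop_eq_getD_add lam r
    omega
  rcases (show r = rh ∨ r + 1 = rh ∨ r + 2 ≤ rh by omega) with rfl | rfl | hfar
  · omega
  · have := hrow x
    have := sum_drop_eq_getD_add lam (r + 1)
    omega
  · obtain ⟨r', rfl⟩ : ∃ r', rh = r' + 1 := ⟨rh - 1, by omega⟩
    have := sum_drop_antitone lam (show r + 1 ≤ r' by omega)
    have := sum_drop_eq_getD_add lam r'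
    have := sum_drop_eq_getD_add lam (r' + 1)
    have := hlam.getD_antitone (show r' ≤ r' + 1 by omega)
    omega

lemma pistoled_partitionDiagram_iff {lam : List ℕ} (hlam : IsPartition lam) {S : List ℕ} :
    Pistoled (partitionDiagram lam) S ↔ ∃ r < lam.length, ∃ x < lam.getD r 0, ∀ k ∈ S,
      k < lam.sum ∧ cellIndex lam r x ≤ k ∧ k ≤ cellIndex lam r x + lam.getD r 0 := by
  simp only [Pistoled, mem_partitionDiagram, length_partitionDiagram]
  constructor
  · rintro ⟨_, ⟨r, hr, x, hx, rfl⟩, hS⟩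
    exact ⟨r, hr, x, hx, fun k hk =>
      ⟨(hS k hk).1, (inPistol_partitionDiagram_getD_iff hlam hx (hS k hk).1).mp (hS k hk).2⟩⟩
  · rintro ⟨r, hr, x, hx, hS⟩
    exact ⟨_, ⟨r, hr, x, hx, rfl⟩, fun k hk =>
      ⟨(hS k hk).1, (inPistol_partitionDiagram_getD_iff hlam hx (hS k hk).1).mpr (hS k hk).2⟩⟩

lemma exists_cellIndex_of_le {lam : List ℕ} {k : ℕ} (r : ℕ) (hk : cellIndex lam r 0 ≤ k) :
    ∃ x, cellIndex lam r x = k :=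
  ⟨k - cellIndex lam r 0, by unfold cellIndex at *; omega⟩

lemma pistoled_add_getD_succ {lam : List ℕ} (hlam : IsPartition lam) {r a b : ℕ}
    (ha : cellIndex lam (r + 1) 0 ≤ a) (hab : a ≤ b) (hb : b < cellIndex lam r 0) :
    Pistoled (partitionDiagram lam) [a + lam.getD (r + 1) 0, b] := by
  obtain ⟨x, rfl⟩ := exists_cellIndex_of_le (r + 1) ha
  have hrow := cellIndex_succ_add lam r
  have hx : x < lam.getD (r + 1) 0 := by
    have := hrow 0; simp only [cellIndex] at hab hb this; omega
  have hr : r + 1 < lam.length := by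
    by_contra h; rw [List.getD_eq_default _ _ (by omega)] at hx; omega
  have hsum := cellIndex_lt_sum (lt_of_lt_of_le hx (hlam.getD_antitone (Nat.le_succ r)))
  have hrx := hrow x
  have hr0 : cellIndex lam r 0 ≤ cellIndex lam r x := Nat.add_le_add_left (Nat.zero_le x) _
  rw [pistoled_partitionDiagram_iff hlam]
  refine ⟨r + 1, hr, x, hx, ?_⟩
  simp only [List.mem_cons, List.not_mem_nil, or_false]
  rintro k (rfl | rfl) <;> omega

section InvZero

variable {δ : List (ℤ × ℤ)} {w : List ℕ}

lemma not_invTripleAt_of_invD_eq_zero (hinv : invD δ w = 0) (j k : ℕ) :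
    ¬ InvTripleAt δ w j k := fun h => by
  have hcard : ((Finset.range δ.length ×ˢ Finset.range δ.length).filter fun p =>
      InvTripleAt δ w p.1 p.2).card = 0 := by
    unfold invD at hinv; omega
  exact Finset.filter_eq_empty_iff.mp (Finset.card_eq_zero.mp hcard)
    (x := (j, k)) (Finset.mem_product.mpr
      ⟨Finset.mem_range.mpr (h.1.trans h.2.1), Finset.mem_range.mpr h.2.1⟩) h

lemma not_invPairBelowAt_of_invD_eq_zero (hinv : invD δ w = 0) (j k : ℕ) :
    ¬ InvPairBelowAt δ w j k := fun h => by
  have hcard : ((Finset.range δ.length ×ˢ Finset.range δ.length).filter fun p =>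
      InvPairBelowAt δ w p.1 p.2).card = 0 := by
    unfold invD at hinv; omega
  exact Finset.filter_eq_empty_iff.mp (Finset.card_eq_zero.mp hcard)
    (x := (j, k)) (Finset.mem_product.mpr
      ⟨Finset.mem_range.mpr (h.1.trans h.2.1), Finset.mem_range.mpr h.2.1⟩) h

end InvZero

section PartitionFilling

variable {lam lam' w : List ℕ}

lemma getD_le_getD_of_invD_eq_zero (hinv : invD (partitionDiagram lam) w = 0) {a b : ℕ}
    (ha : cellIndex lam 0 0 ≤ a) (hab : a < b) (hb : b < lam.sum) :
    w.getD a 0 ≤ w.getD b 0 := by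
  obtain ⟨xa, rfl⟩ := exists_cellIndex_of_le 0 ha
  obtain ⟨xb, rfl⟩ := exists_cellIndex_of_le 0 (ha.trans hab.le)
  have hsum := sum_eq_cellIndex_zero_add lam
  have h0 : 0 < lam.length := by
    by_contra h; rw [List.getD_eq_default _ _ (by omega)] at hsum; unfold cellIndex at *; omega
  have hxa : xa < lam.getD 0 0 := by unfold cellIndex at *; omega
  have hxb : xb < lam.getD 0 0 := by unfold cellIndex at *; omega
  by_contra hlt
  refine not_invPairBelowAt_of_invD_eq_zero hinv _ _ ⟨hab, ?_, ?_, ?_, by omega⟩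
  · rwa [length_partitionDiagram]
  · rw [partitionDiagram_getD_cellIndex h0 hxa, partitionDiagram_getD_cellIndex h0 hxb]
  · rw [partitionDiagram_getD_cellIndex h0 hxa, mem_partitionDiagram]
    rintro ⟨r, -, x, -, hc⟩
    simp only [Prod.ext_iff] at hc
    omega

lemma eq_one_of_invD_eq_zero (hyam : IsYam lam' w) (hlen : w.length = lam.sum)
    (hinv : invD (partitionDiagram lam) w = 0) {k : ℕ} (hk0 : cellIndex lam 0 0 ≤ k)
    (hk : k < lam.sum) : w.getD k 0 = 1 := by
  set s := cellIndex lam 0 0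
  have hsorted : (w.drop s).Pairwise (· ≤ ·) := by
    refine List.pairwise_iff_getElem.mpr fun a b ha hb hab => ?_
    rw [List.length_drop] at hb
    rw [List.getElem_drop, List.getElem_drop, ← List.getD_eq_getElem _ 0,
      ← List.getD_eq_getElem _ 0]
    exact getD_le_getD_of_invD_eq_zero hinv (by omega) (by omega) (by omega)
  have hmem : w.getD k 0 ∈ w.drop s := by
    have := List.getElem_mem (l := w.drop s) (n := k - s) (by simp; omega)
    simp only [List.getElem_drop, show s + (k - s) = k by omega] at this
    rwa [List.getD_eq_getElem _ _ (by omega)]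
  exact hyam.eq_one_of_mem_drop hsorted hmem

lemma not_invTriple_cellIndex (hlam : IsPartition lam) (hinv : invD (partitionDiagram lam) w = 0)
    {r a b : ℕ} (ha : cellIndex lam (r + 1) 0 ≤ a) (hab : a < b) (hb : b < cellIndex lam r 0) :
    ¬ ((w.getD (a + lam.getD (r + 1) 0) 0 < w.getD b 0 ∧ w.getD b 0 < w.getD a 0) ∨
      (w.getD a 0 ≤ w.getD (a + lam.getD (r + 1) 0) 0 ∧
        w.getD (a + lam.getD (r + 1) 0) 0 < w.getD b 0) ∨
      (w.getD b 0 < w.getD a 0 ∧ w.getD a 0 ≤ w.getD (a + lam.getD (r + 1) 0) 0)) := by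
  obtain ⟨xa, rfl⟩ := exists_cellIndex_of_le (r + 1) ha
  obtain ⟨xb, rfl⟩ := exists_cellIndex_of_le (r + 1) (ha.trans hab.le)
  have hrow := cellIndex_succ_add lam r
  have hxb : xb < lam.getD (r + 1) 0 := by
    have := hrow 0; simp only [cellIndex] at hb this; omega
  have hxa : xa < lam.getD r 0 := by
    have := hlam.getD_antitone (Nat.le_add_right r 1); simp only [cellIndex] at hab; omega
  have hxab : xa < xb := by simp only [cellIndex] at hab; omega
  have hr : r + 1 < lam.length := by
    by_contra h; rw [List.getD_eq_default _ _ (by omega)] at hxb; omega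
  intro hbad
  refine not_invTripleAt_of_invD_eq_zero hinv _ _ ⟨hab, ?_, ?_,
    cellIndex lam r xa, ?_, ?_, by rwa [hrow xa] at hbad⟩
  · rw [length_partitionDiagram]; exact cellIndex_lt_sum hxb
  · rw [partitionDiagram_getD_cellIndex hr (by omega), partitionDiagram_getD_cellIndex hr hxb]
  · rw [length_partitionDiagram]; exact cellIndex_lt_sum hxa
  · rw [partitionDiagram_getD_cellIndex (by omega) hxa,
      partitionDiagram_getD_cellIndex hr (by omega)]
    push_cast; ring_nf

end PartitionFilling

def JamsAt (δ : List (ℤ × ℤ)) (w : List ℕ) (i j : ℕ) : Prop :=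
  1 ≤ i ∧ 1 ≤ j ∧ j ≤ w.count i ∧ j + 1 ≤ w.count (i + 1) ∧
    Pistoled δ [posFromLast w i j, posFromLast w (i + 1) (j + 1)]

section NoJam

variable {lam lam' w : List ℕ} (hlam : IsPartition lam) (hlen : w.length = lam.sum)
  (hyam : IsYam lam' w) (hinv : invD (partitionDiagram lam) w = 0)
include hlen hyam hinv

lemma posFromLast_lt_cellIndex_zero {v s : ℕ} (hv : 2 ≤ v) (hs : 1 ≤ s)
    (hsw : s ≤ w.count v) : posFromLast w v s < cellIndex lam 0 0 := by
  obtain ⟨hp, hpv, -⟩ := posFromLast_spec hs hsw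
  by_contra h
  have := eq_one_of_invD_eq_zero hyam hlen hinv (not_lt.mp h) (hlen ▸ hp)
  omega

include hlam

lemma not_invTriple_row_one {a b : ℕ} (ha : cellIndex lam 1 0 ≤ a) (hab : a < b)
    (hb : b < cellIndex lam 0 0) :
    ¬ (1 < w.getD b 0 ∧ w.getD b 0 < w.getD a 0) ∧ ¬ (w.getD a 0 ≤ 1 ∧ 1 < w.getD b 0) := by
  have hbelow : cellIndex lam 1 0 + lam.getD 1 0 = cellIndex lam 0 0 := cellIndex_succ_add lam 0 0
  have := sum_eq_cellIndex_zero_add lam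
  have := hlam.getD_antitone (show 0 ≤ 1 by omega)
  have hone := eq_one_of_invD_eq_zero hyam hlen hinv (k := a + lam.getD 1 0) (by omega) (by omega)
  have := not_invTriple_cellIndex hlam hinv (r := 0) ha hab hb
  simp only [Nat.zero_add] at this
  omega

lemma JamsAt.pistol_in_row_one (h333 : lam.getD 2 0 < 3) {i j : ℕ}
    (hjam : JamsAt (partitionDiagram lam) w i j) :
    cellIndex lam 1 0 ≤ posFromLast w (i + 1) (j + 1) ∧
      posFromLast w i j ≤ posFromLast w (i + 1) (j + 1) + lam.getD 1 0 := by
  obtain ⟨hi, hj, -, hjw, hpist⟩ := hjam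
  obtain ⟨r, -, x, hx, hS⟩ := (pistoled_partitionDiagram_iff hlam).mp hpist
  obtain ⟨-, -, hP⟩ := hS (posFromLast w i j) (by simp)
  obtain ⟨-, hQ, -⟩ := hS (posFromLast w (i + 1) (j + 1)) (by simp)
  have hQP := hyam.posFromLast_add_three_le hi hj hjw
  have hQ0 := posFromLast_lt_cellIndex_zero hlen hyam hinv (by omega) (by omega) hjw
  have hr : r < 2 := by
    by_contra h
    have := hlam.getD_antitone (show 2 ≤ r by omega)
    omega
  have hr1 : r = 1 := by
    by_contra h
    obtain rfl : r = 0 := by omega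
    simp only [cellIndex] at hQ hQ0
    omega
  subst hr1
  simp only [cellIndex] at hQ hP ⊢
  omega

lemma JamsAt.eq_one (h333 : lam.getD 2 0 < 3) {i j : ℕ}
    (hjam : JamsAt (partitionDiagram lam) w i j) : i = 1 := by
  obtain ⟨hQ1, -⟩ := hjam.pistol_in_row_one hlam hlen hyam hinv h333
  obtain ⟨hi, -, -, hjw', -⟩ := hjam
  have hQP' := hyam.posFromLast_succ_lt hi (by omega) hjw'
  obtain ⟨-, hQv, -⟩ := posFromLast_spec (by omega) hjw'
  obtain ⟨hP', hP'v, -⟩ := posFromLast_spec (by omega) (hjw'.trans (hyam.count_succ_le hi))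
  by_cases hP'0 : posFromLast w i (j + 1) < cellIndex lam 0 0
  · have := (not_invTriple_row_one hlam hlen hyam hinv hQ1 hQP' hP'0).1
    omega
  · have := eq_one_of_invD_eq_zero hyam hlen hinv (not_lt.mp hP'0) (hlen ▸ hP')
    omega

lemma JamsAt.exists_lt (h333 : lam.getD 2 0 < 3) {i j : ℕ}
    (hjam : JamsAt (partitionDiagram lam) w i j) :
    ∃ t < j, JamsAt (partitionDiagram lam) w i t := by
  have hi1 := hjam.eq_one hlam hlen hyam hinv h333
  obtain ⟨hQ1, hPQ⟩ := hjam.pistol_in_row_one hlam hlen hyam hinv h333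
  obtain ⟨hi, hj, hjw, hjw', -⟩ := hjam
  have hcount := hyam.count_succ_le hi
  have hQR := posFromLast_lt_posFromLast hj (by omega : j < j + 1) hjw'
  have hR0 := posFromLast_lt_cellIndex_zero hlen hyam hinv (show 2 ≤ i + 1 by omega) hj (by omega)
  obtain ⟨hP, hPv, hPc⟩ := posFromLast_spec hj hjw
  have hbelow : cellIndex lam 1 0 + lam.getD 1 0 = cellIndex lam 0 0 := cellIndex_succ_add lam 0 0
  set M := posFromLast w (i + 1) j + lam.getD 1 0
  have hM : cellIndex lam 0 0 ≤ M ∧ M < lam.sum := by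
    have := sum_eq_cellIndex_zero_add lam
    have := hlam.getD_antitone (show 0 ≤ 1 by omega)
    omega
  have hMv : w.getD M 0 = i := hi1 ▸ eq_one_of_invD_eq_zero hyam hlen hinv hM.1 hM.2
  set t := (w.drop M).count i
  have hMt : posFromLast w i t = M := posFromLast_eq_of_count_drop_eq (by omega) hMv rfl
  have ht1 : 1 ≤ t :=
    Nat.one_le_of_lt (count_drop_lt_count_drop (Nat.lt_succ_self M) (by omega) hMv)
  have htj : t < j := hPc ▸ count_drop_lt_count_drop (by omega) hP hPv
  refine ⟨t, htj, hi, ht1, (List.drop_sublist M w).count_le i, by omega, ?_⟩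
  have hRU : posFromLast w (i + 1) j ≤ posFromLast w (i + 1) (t + 1) :=
    posFromLast_le_posFromLast (by omega) (by omega) (by omega)
  have hU0 := posFromLast_lt_cellIndex_zero hlen hyam hinv (show 2 ≤ i + 1 by omega)
    (show 1 ≤ t + 1 by omega) (by omega)
  rw [hMt]
  exact pistoled_add_getD_succ hlam (r := 0) (hQ1.trans hQR.le) hRU hU0

end NoJam

theorem no333_no_jam_general (lam : List ℕ) (hlam : IsPartition lam)
    (h333 : lam.getD 2 0 < 3)
    (lam' : List ℕ)
    (w : List ℕ) (hlen : w.length = lam.sum) (hyam : IsYam lam' w)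
    (hinv : invD (partitionDiagram lam) w = 0) :
    ¬ Jams (partitionDiagram lam) w := by
  rintro ⟨i, j, hjam⟩
  induction j using Nat.strong_induction_on with
  | _ j ih =>
    obtain ⟨t, htj, hjam'⟩ := JamsAt.exists_lt hlam hlen hyam hinv h333 hjam
    exact ih t htj hjam'

theorem no333_no_jam (lam : List ℕ) (hlam : IsPartition lam)
    (h333 : lam.getD 2 0 < 3)
    (lam' : List ℕ) (hlam' : IsPartition lam') (hsum : lam'.sum = lam.sum)
    (w : List ℕ) (hlen : w.length = lam.sum) (hyam : IsYam lam' w)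
    (hinv : invD (partitionDiagram lam) w = 0) :
    ¬ Jams (partitionDiagram lam) w :=
  no333_no_jam_general lam hlam h333 lam' w hlen hyam hinv
end
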